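/- arXiv:1211.2268 — 13 statements merged into one kernel-verified Lean document; each statement's English description precedes it below -/
import Mathlib

section
/- If 0 ≤ λ ≤ 1 and 1 ≤ x ≤ 2, then 1 − λ(1 − 1/x) ≤ x^{−λ/(2 ln 2)}. -/
/-! On `[1, 2]` the convex function `x ↦ x log x` lies below its chord, which gives
`log x ≤ 2 log 2 · (1 - 1/x)`. Hence `1 - λ(1 - 1/x) ≤ 1 - (λ / (2 log 2)) log x`, and the right-hand
side is at most `exp (-(λ / (2 log 2)) log x) = x^{-λ/(2 ln 2)}` by `1 + t ≤ exp t`. -/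

open Real

lemma Real.mul_log_le_two_mul_log_two_mul_sub_one {x : ℝ} (hx1 : 1 ≤ x) (hx2 : x ≤ 2) :
    x * log x ≤ 2 * log 2 * (x - 1) := by
  have hchord := convexOn_mul_log.2 (Set.mem_Ici.2 zero_le_one) (Set.mem_Ici.2 zero_le_two)
    (sub_nonneg.2 hx2) (sub_nonneg.2 hx1) (by ring)
  simp only [smul_eq_mul, log_one, mul_zero, mul_one] at hchord
  rw [show 2 - x + (x - 1) * 2 = x by ring] at hchord
  linarith

lemma Real.log_le_two_mul_log_two_mul_one_sub_inv {x : ℝ} (hx1 : 1 ≤ x) (hx2 : x ≤ 2) :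
    log x ≤ 2 * log 2 * (1 - 1 / x) := by
  have hx0 : 0 < x := zero_lt_one.trans_le hx1
  rw [show 2 * log 2 * (1 - 1 / x) = 2 * log 2 * (x - 1) / x by field_simp, le_div_iff₀ hx0,
    mul_comm]
  exact mul_log_le_two_mul_log_two_mul_sub_one hx1 hx2

lemma Real.one_add_mul_log_le_rpow {x : ℝ} (hx : 0 < x) (t : ℝ) : 1 + t * log x ≤ x ^ t := by
  rw [rpow_def_of_pos hx, mul_comm, add_comm]
  exact add_one_le_exp _

theorem stmt0_general (lam x : ℝ) (hlam0 : 0 ≤ lam)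
    (hx1 : 1 ≤ x) (hx2 : x ≤ 2) :
    1 - lam * (1 - 1 / x) ≤ x ^ (-lam / (2 * Real.log 2)) := by
  have hlog2 : 0 < 2 * log 2 := by positivity
  calc 1 - lam * (1 - 1 / x)
      ≤ 1 - lam * (log x / (2 * log 2)) := by
        gcongr
        rw [div_le_iff₀' hlog2]
        exact log_le_two_mul_log_two_mul_one_sub_inv hx1 hx2
    _ = 1 + -lam / (2 * log 2) * log x := by ring
    _ ≤ x ^ (-lam / (2 * log 2)) := one_add_mul_log_le_rpow (zero_lt_one.trans_le hx1) _

/-- Lemma 1(b): if `0 ≤ λ ≤ 1` and `1 ≤ x ≤ 2`, then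
`1 − λ(1 − 1/x) ≤ x^{−λ/(2 ln 2)}`. -/
theorem stmt0 (lam x : ℝ) (hlam0 : 0 ≤ lam) (hlam1 : lam ≤ 1)
    (hx1 : 1 ≤ x) (hx2 : x ≤ 2) :
    1 - lam * (1 - 1 / x) ≤ x ^ (-lam / (2 * Real.log 2)) :=
  stmt0_general lam x hlam0 hx1 hx2
end

section
/- If E ≥ 1, ε ≥ 0 and r := max{Eε/2, ε} satisfies r < 1, then (1 − ε)^{1−E} − 1 ≤ (E − 1)·ε/(1 − r). -/
/-!
Write `b = E - 1`. For `E ≤ 2` we have `r = ε`, and the claim is Bernoulli's inequality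
`(1 - ε)^(1 - b) ≤ 1 - (1 - b) ε` for the exponent `1 - b ∈ [0, 1]`, divided by `1 - ε`.
For `E ≥ 2` we have `r = (b + 1) ε / 2`, and the claim is the Padé-type bound
`1 - (b + 1) ε / 2 ≤ (1 - ε)^b (1 + (b - 1) ε / 2)`. Both sides agree at `ε = 0`, and the
derivative of their difference is `(b + 1)/2 · (1 - (1 - ε)^(b - 1) (1 + (b - 1) ε))`, which is
nonnegative since `(1 - ε)^(b - 1) ≤ exp (-(b - 1) ε) ≤ 1 / (1 + (b - 1) ε)`.
-/

open Real Set

lemma Real.one_sub_rpow_mul_one_add_mul_le_one {b s : ℝ} (hb : 0 ≤ b) (hs : s ≤ 1) :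
    (1 - s) ^ b * (1 + b * s) ≤ 1 := by
  rcases le_total (1 + b * s) 0 with hneg | hpos
  · exact (mul_nonpos_of_nonneg_of_nonpos (rpow_nonneg (by linarith) b) hneg).trans zero_le_one
  calc (1 - s) ^ b * (1 + b * s) ≤ exp (-s) ^ b * exp (b * s) := by
        gcongr <;> linarith [one_sub_le_exp_neg s, add_one_le_exp (b * s)]
    _ = 1 := by rw [← exp_mul, ← exp_add]; ring_nf; exact exp_zero

lemma Real.one_sub_mul_le_one_sub_rpow_mul_one_add {a ε : ℝ} (ha : 1 ≤ a) (hε : 0 ≤ ε)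
    (hε1 : ε ≤ 1) :
    1 - (a + 1) * ε / 2 ≤ (1 - ε) ^ a * (1 + (a - 1) * ε / 2) := by
  set f : ℝ → ℝ := fun s ↦ (1 - s) ^ a * (1 + (a - 1) * s / 2) + (a + 1) * s / 2
  have hf' : ∀ x ∈ Ioo 0 ε, HasDerivAt f
      (-1 * a * (1 - x) ^ (a - 1) * (1 + (a - 1) * x / 2)
        + (1 - x) ^ a * ((a - 1) / 2) + (a + 1) / 2) x := by
    intro x hx
    have hx1 : 1 - x ≠ 0 := by linarith [hx.2]
    have hlin (c : ℝ) : HasDerivAt (fun s : ℝ ↦ c * s / 2) (c / 2) x := by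
      simpa using (hasDerivAt_id x).const_mul c |>.div_const 2
    exact ((((hasDerivAt_id x).const_sub 1).rpow_const (Or.inl hx1)).mul
      ((hlin (a - 1)).const_add 1)).add (hlin (a + 1)) |>.congr_deriv (by simp)
  have hmono : MonotoneOn f (Icc 0 ε) := by
    refine monotoneOn_of_deriv_nonneg (convex_Icc 0 ε) ?_ ?_ ?_
    · exact ((continuous_const.sub continuous_id).continuousOn.rpow_const
        fun _ _ ↦ Or.inr (by linarith)).mul (by fun_prop) |>.add (by fun_prop)
    · rw [interior_Icc]
      exact fun x hx ↦ (hf' x hx).differentiableAt.differentiableWithinAt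
    · rw [interior_Icc]
      intro x hx
      have hx1 : 0 < 1 - x := by linarith [hx.2]
      have hsplit : (1 - x) ^ a = (1 - x) ^ (a - 1) * (1 - x) := by
        rw [← rpow_add_one hx1.ne']; ring_nf
      have hbern := one_sub_rpow_mul_one_add_mul_le_one (sub_nonneg.2 ha) (s := x) (by linarith)
      -- the derivative equals `(a + 1)/2 · (1 - (1 - x)^(a - 1) (1 + (a - 1) x))`
      rw [(hf' x hx).deriv, hsplit]
      nlinarith
  have hends := hmono ⟨le_rfl, hε⟩ ⟨hε, le_rfl⟩ hε
  simp only [f, sub_zero, one_rpow] at hends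
  linarith

lemma Real.one_sub_rpow_one_sub_sub_one_le_of_le_two {E ε : ℝ} (hE : 1 ≤ E) (hE2 : E ≤ 2)
    (hε : ε < 1) :
    (1 - ε) ^ (1 - E) - 1 ≤ (E - 1) * ε / (1 - ε) := by
  have hc : 0 < 1 - ε := by linarith
  have hbern : (1 - ε) ^ (2 - E) ≤ 1 + (2 - E) * -ε := by
    simpa [sub_eq_add_neg] using
      rpow_one_add_le_one_add_mul_self (s := -ε) (by linarith) (by linarith) (by linarith)
  have hsplit : (1 - ε) ^ (2 - E) = (1 - ε) ^ (1 - E) * (1 - ε) := by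
    rw [← rpow_add_one hc.ne']; ring_nf
  rw [sub_le_iff_le_add, div_add' _ _ _ hc.ne', le_div_iff₀ hc]
  linarith

lemma Real.one_sub_rpow_one_sub_sub_one_le_of_two_le {E ε : ℝ} (hE : 2 ≤ E) (hε : 0 ≤ ε)
    (hr : E * ε / 2 < 1) :
    (1 - ε) ^ (1 - E) - 1 ≤ (E - 1) * ε / (1 - E * ε / 2) := by
  have hε1 : ε < 1 := by nlinarith
  have hd : 0 < 1 - E * ε / 2 := by linarith
  have hpos : 0 < (1 - ε) ^ (E - 1) := rpow_pos_of_pos (by linarith) _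
  have hpade := one_sub_mul_le_one_sub_rpow_mul_one_add (a := E - 1) (by linarith) hε hε1.le
  rw [show 1 - E = -(E - 1) by ring, rpow_neg (by linarith), sub_le_iff_le_add,
    div_add' _ _ _ hd.ne', le_div_iff₀ hd, inv_mul_le_iff₀ hpos]
  linarith

/-- Lemma 13(c): if `E ≥ 1`, `ε ≥ 0` and `r := max{Eε/2, ε} < 1`, then
`(1 − ε)^{1−E} − 1 ≤ (E − 1)·ε/(1 − r)`. -/
theorem stmt3 (E ε : ℝ) (hE : 1 ≤ E) (hε : 0 ≤ ε)
    (hr : max (E * ε / 2) ε < 1) :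
    (1 - ε) ^ (1 - E) - 1 ≤ (E - 1) * ε / (1 - max (E * ε / 2) ε) := by
  rcases le_total E 2 with hE2 | hE2
  · have hmax : max (E * ε / 2) ε = ε := max_eq_right (by nlinarith)
    rw [hmax] at hr ⊢
    exact one_sub_rpow_one_sub_sub_one_le_of_le_two hE hE2 hr
  · have hmax : max (E * ε / 2) ε = E * ε / 2 := max_eq_left (by nlinarith)
    rw [hmax] at hr ⊢
    exact one_sub_rpow_one_sub_sub_one_le_of_two_le hE2 hε hr
end

section
/- Let n ≥ 1, let p* ∈ (0,∞)^n, let w_i > 0, let f ≥ 1, γ ≥ 1 and 0 < α ≤ 1. Let x_i : (0,∞)^n → (0,∞) satisfy: (i) x_i(p*) = w_i; (ii) x_i is nonincreasing in each coordinate j ≠ i (all other goods are complements of good i); (iii) for every price vector p and every scalar q > 1, x_i(q·p) ≥ x_i(p)/q^γ; (iv) for every price vector p and every 0 < t < 1, replacing the i-th coordinate p_i of p by t·p_i changes the value of x_i to at least x_i(p)·t^{−α}. Then for every f-bounded price vector p whose i-th coordinate satisfies p_i = r·p_i*/f with 1 ≤ r ≤ f², one has x_i(p) ≥ w_i · f^{2α−γ}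 · r^{−α}. -/
/-! Scale `p*` up to `f • p*`, which costs at most a factor `f^γ` of demand. Then lower the
`i`-th price to `p_i = (r / f²) · f p*_i`, which gains at least a factor `(r / f²)^{-α}`.
The resulting vector dominates `p` in every coordinate other than `i` and agrees with it at
`i`, so by complementarity demand at `p` is at least demand there. -/

open Function

section Demand

variable {ι : Type*} (x : (ι → ℝ) → ℝ)

theorem div_rpow_le_apply_mul {γ : ℝ} {p : ι → ℝ} (hp : ∀ j, 0 < p j)
    (hincome : ∀ p : ι → ℝ, (∀ j, 0 < p j) → ∀ q : ℝ, 1 < q →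
      x p / q ^ γ ≤ x (fun j => q * p j))
    {q : ℝ} (hq : 1 ≤ q) : x p / q ^ γ ≤ x (fun j => q * p j) := by
  rcases hq.eq_or_lt with rfl | hq
  · simp
  · exact hincome p hp q hq

theorem mul_rpow_neg_le_apply_update {α : ℝ} (i : ι) [DecidableEq ι] {p : ι → ℝ}
    (hp : ∀ j, 0 < p j)
    (hprice : ∀ p : ι → ℝ, (∀ j, 0 < p j) → ∀ t : ℝ, 0 < t → t < 1 →
      x p * t ^ (-α) ≤ x (update p i (t * p i)))
    {t : ℝ} (ht0 : 0 < t) (ht1 : t ≤ 1) : x p * t ^ (-α) ≤ x (update p i (t * p i)) := by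
  rcases ht1.eq_or_lt with rfl | ht1
  · simp
  · exact hprice p hp t ht0 ht1

theorem apply_le_apply_of_forall_ne_le [Fintype ι] [DecidableEq ι] (i : ι)
    (hcompl : ∀ p : ι → ℝ, (∀ j, 0 < p j) → ∀ j, j ≠ i →
      ∀ c : ℝ, p j ≤ c → x (update p j c) ≤ x p)
    {p q : ι → ℝ} (hp : ∀ j, 0 < p j) (hpq : ∀ j, j ≠ i → p j ≤ q j)
    (hi : q i = p i) : x q ≤ x p := by
  have hq : ∀ j, 0 < q j := fun j =>
    if hj : j = i then hj ▸ hi ▸ hp i else (hp j).trans_le (hpq j hj)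
  have key : ∀ s : Finset ι, i ∉ s → x (s.piecewise q p) ≤ x p := by
    intro s
    induction s using Finset.induction_on with
    | empty => simp
    | insert a s has ih =>
      intro hins
      have hai : a ≠ i := fun h => hins (h ▸ Finset.mem_insert_self a s)
      rw [Finset.piecewise_insert]
      calc x (update (s.piecewise q p) a (q a))
          ≤ x (s.piecewise q p) :=
            hcompl _ (fun j => s.piecewise_cases q p (0 < ·) (hq j) (hp j)) a hai (q a)
              (by rw [Finset.piecewise_eq_of_notMem _ _ _ has]; exact hpq a hai)
        _ ≤ x p := ih (fun h => hins (Finset.mem_insert_of_mem h))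
  have hq_eq : (Finset.univ.erase i).piecewise q p = q := by
    ext j
    rcases eq_or_ne j i with rfl | hj
    · simp [hi]
    · simp [hj]
  calc x q = x ((Finset.univ.erase i).piecewise q p) := by rw [hq_eq]
    _ ≤ x p := key _ (Finset.notMem_erase i _)

end Demand

theorem mul_rpow_sub_mul_rpow_neg {w f r γ α : ℝ} (hf : 0 < f) (hr : 0 < r) :
    w * f ^ (2 * α - γ) * r ^ (-α) = w / f ^ γ * (r / f ^ 2) ^ (-α) := by
  have hf2 : (f ^ 2) ^ (-α) = (f ^ (2 * α))⁻¹ := by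
    rw [← Real.rpow_natCast, ← Real.rpow_mul hf.le, ← Real.rpow_neg hf.le]
    push_cast; ring_nf
  rw [Real.div_rpow hr.le (by positivity), hf2, Real.rpow_sub hf]
  field_simp

theorem stmt8_general (n : ℕ) (i : Fin n)
    (pstar : Fin n → ℝ) (hpstar : ∀ j, 0 < pstar j)
    (w f γ α : ℝ) (hf : 1 ≤ f)
    (x : (Fin n → ℝ) → ℝ)
    (heq : x pstar = w)
    (hcompl : ∀ p : Fin n → ℝ, (∀ j, 0 < p j) → ∀ j, j ≠ i →
      ∀ c : ℝ, p j ≤ c → x (Function.update p j c) ≤ x p)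
    (hincome : ∀ p : Fin n → ℝ, (∀ j, 0 < p j) → ∀ q : ℝ, 1 < q →
      x p / q ^ γ ≤ x (fun j => q * p j))
    (hprice : ∀ p : Fin n → ℝ, (∀ j, 0 < p j) → ∀ t : ℝ, 0 < t → t < 1 →
      x p * t ^ (-α) ≤ x (Function.update p i (t * p i))) :
    ∀ p : Fin n → ℝ, (∀ j, pstar j / f ≤ p j ∧ p j ≤ f * pstar j) →
      ∀ r : ℝ, 1 ≤ r → r ≤ f ^ 2 → p i = r * pstar i / f →
      w * f ^ (2 * α - γ) * r ^ (-α) ≤ x p := by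
  intro p hp r hr1 hr2 hpi
  have hf0 : 0 < f := one_pos.trans_le hf
  have hr0 : 0 < r := one_pos.trans_le hr1
  set P : Fin n → ℝ := fun j => f * pstar j
  have hP : ∀ j, 0 < P j := fun j => mul_pos hf0 (hpstar j)
  set t := r / f ^ 2
  have htP : t * P i = p i := by simp only [t, P, hpi]; field_simp
  have hp0 : ∀ j, 0 < p j := fun j => (div_pos (hpstar j) hf0).trans_le (hp j).1
  rw [mul_rpow_sub_mul_rpow_neg hf0 hr0, ← heq]
  calc x pstar / f ^ γ * t ^ (-α) ≤ x P * t ^ (-α) := by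
        gcongr
        exact div_rpow_le_apply_mul x hpstar hincome hf
    _ ≤ x (update P i (p i)) := by
        rw [← htP]
        exact mul_rpow_neg_le_apply_update x i hP hprice (by positivity)
          (div_le_one_of_le₀ hr2 (by positivity))
    _ ≤ x p := apply_le_apply_of_forall_ne_le x i hcompl hp0
        (fun j hj => by simpa [hj] using (hp j).2) (by simp)

/-- Lemma 3, part 1 (f-bounded demand lower bound in a market of complements):
if `x_i(p*) = w_i`, `x_i` is nonincreasing in every coordinate `j ≠ i`,
raising all prices by a factor `q > 1` lowers `x_i` by at most a factor `q^γ`,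
and lowering the single price `p_i` by a factor `t < 1` raises `x_i` by at least
the factor `t^{−α}`, then for any `f`-bounded price vector with
`p_i = r·p_i*/f`, `1 ≤ r ≤ f²`, we have `x_i(p) ≥ w_i·f^{2α−γ}·r^{−α}`. -/
theorem stmt8 (n : ℕ) (hn : 1 ≤ n) (i : Fin n)
    (pstar : Fin n → ℝ) (hpstar : ∀ j, 0 < pstar j)
    (w f γ α : ℝ) (hw : 0 < w) (hf : 1 ≤ f) (hγ : 1 ≤ γ)
    (hα0 : 0 < α) (hα1 : α ≤ 1)
    (x : (Fin n → ℝ) → ℝ)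
    (hxpos : ∀ p : Fin n → ℝ, (∀ j, 0 < p j) → 0 < x p)
    (heq : x pstar = w)
    (hcompl : ∀ p : Fin n → ℝ, (∀ j, 0 < p j) → ∀ j, j ≠ i →
      ∀ c : ℝ, p j ≤ c → x (Function.update p j c) ≤ x p)
    (hincome : ∀ p : Fin n → ℝ, (∀ j, 0 < p j) → ∀ q : ℝ, 1 < q →
      x p / q ^ γ ≤ x (fun j => q * p j))
    (hprice : ∀ p : Fin n → ℝ, (∀ j, 0 < p j) → ∀ t : ℝ, 0 < t → t < 1 →
      x p * t ^ (-α) ≤ x (Function.update p i (t * p i))) :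
    ∀ p : Fin n → ℝ, (∀ j, pstar j / f ≤ p j ∧ p j ≤ f * pstar j) →
      ∀ r : ℝ, 1 ≤ r → r ≤ f ^ 2 → p i = r * pstar i / f →
      w * f ^ (2 * α - γ) * r ^ (-α) ≤ x p :=
  stmt8_general n i pstar hpstar w f γ α hf x heq hcompl hincome hprice
end

section
/- Let n ≥ 1, let p* ∈ (0,∞)^n, let w_i > 0, let f ≥ 1, γ ≥ 1 and 0 < α ≤ 1. Let x_i : (0,∞)^n → (0,∞) satisfy: (i) x_i(p*) = w_i; (ii) x_i is nonincreasing in each coordinate j ≠ i (all other goods are complements of good i); (iii) for every price vector p and every scalar 0 < q < 1, x_i(q·p) ≤ x_i(p)/q^γ; (iv) for every price vector p and every t > 1, replacing the i-th coordinate p_i of p by t·p_i changes the value of x_i to at most x_i(p)·t^{−α}. Then for every f-bounded price vector p whose i-th coordinate satisfies p_i = f·p_i*/q with 1 ≤ q ≤ f², one has x_i(p) ≤ w_i · f^{γ−2α} · q^{α}. -/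
/-!
Lower every price to `p*/f`, which raises demand by at most `f^γ`; then raise `p_i` alone
by the factor `f²/q`, which brings it down by `(f²/q)^{-α}`; finally raise the remaining prices
one at a time to their values in `p`, which can only lower demand since those goods are complements.
-/

open Function

section Demand

variable {ι : Type*} {x : (ι → ℝ) → ℝ}

lemma apply_le_of_antitone_update_ne [Fintype ι] [DecidableEq ι] {i : ι}
    (hcompl : ∀ p : ι → ℝ, (∀ j, 0 < p j) → ∀ j, j ≠ i →
      ∀ c : ℝ, p j ≤ c → x (update p j c) ≤ x p)
    {p p' : ι → ℝ} (hp : ∀ j, 0 < p j) (hle : ∀ j, p j ≤ p' j) (hi : p' i = p i) :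
    x p' ≤ x p := by
  have hpos : ∀ (s : Finset ι) j, 0 < s.piecewise p' p j := fun s j => by
    by_cases hj : j ∈ s
    · simpa [hj] using (hp j).trans_le (hle j)
    · simpa [hj] using hp j
  suffices ∀ s : Finset ι, x (s.piecewise p' p) ≤ x p by
    simpa using this Finset.univ
  intro s
  induction s using Finset.induction with
  | empty => simp
  | insert a s ha ih =>
    rw [Finset.piecewise_insert]
    rcases eq_or_ne a i with rfl | hai
    · rwa [update_eq_self_iff.mpr (by by_cases h : a ∈ s <;> simp [h, hi])]
    · refine (hcompl _ (hpos s) a hai _ ?_).trans ih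
      simpa [ha] using hle a

lemma apply_mul_le_div_rpow {γ : ℝ}
    (hincome : ∀ p : ι → ℝ, (∀ j, 0 < p j) → ∀ q : ℝ, 0 < q → q < 1 →
      x (fun j => q * p j) ≤ x p / q ^ γ)
    {p : ι → ℝ} (hp : ∀ j, 0 < p j) {q : ℝ} (hq0 : 0 < q) (hq1 : q ≤ 1) :
    x (fun j => q * p j) ≤ x p / q ^ γ := by
  rcases hq1.lt_or_eq with hq1 | rfl
  · exact hincome p hp q hq0 hq1
  · simp

lemma apply_update_mul_le_mul_rpow [DecidableEq ι] {i : ι} {α : ℝ}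
    (hprice : ∀ p : ι → ℝ, (∀ j, 0 < p j) → ∀ t : ℝ, 1 < t →
      x (update p i (t * p i)) ≤ x p * t ^ (-α))
    {p : ι → ℝ} (hp : ∀ j, 0 < p j) {t : ℝ} (ht : 1 ≤ t) :
    x (update p i (t * p i)) ≤ x p * t ^ (-α) := by
  rcases ht.lt_or_eq with ht | rfl
  · exact hprice p hp t ht
  · simp

end Demand

lemma rpow_inv_div_mul_rpow_neg {w f q : ℝ} (γ α : ℝ) (hf : 0 < f) (hq : 0 < q) :
    w / f⁻¹ ^ γ * (f ^ 2 / q) ^ (-α) = w * f ^ (γ - 2 * α) * q ^ α := by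
  rw [Real.inv_rpow hf.le, Real.rpow_neg (by positivity), Real.div_rpow (by positivity) hq.le,
    ← Real.rpow_natCast, ← Real.rpow_mul hf.le, Real.rpow_sub hf]
  field_simp
  ring_nf

theorem stmt9_general (n : ℕ) (i : Fin n)
    (pstar : Fin n → ℝ) (hpstar : ∀ j, 0 < pstar j)
    (w f γ α : ℝ) (hf : 1 ≤ f)
    (x : (Fin n → ℝ) → ℝ)
    (heq : x pstar = w)
    (hcompl : ∀ p : Fin n → ℝ, (∀ j, 0 < p j) → ∀ j, j ≠ i →
      ∀ c : ℝ, p j ≤ c → x (Function.update p j c) ≤ x p)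
    (hincome : ∀ p : Fin n → ℝ, (∀ j, 0 < p j) → ∀ q : ℝ, 0 < q → q < 1 →
      x (fun j => q * p j) ≤ x p / q ^ γ)
    (hprice : ∀ p : Fin n → ℝ, (∀ j, 0 < p j) → ∀ t : ℝ, 1 < t →
      x (Function.update p i (t * p i)) ≤ x p * t ^ (-α)) :
    ∀ p : Fin n → ℝ, (∀ j, pstar j / f ≤ p j ∧ p j ≤ f * pstar j) →
      ∀ q : ℝ, 1 ≤ q → q ≤ f ^ 2 → p i = f * pstar i / q →
      x p ≤ w * f ^ (γ - 2 * α) * q ^ α := by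
  intro p hp q hq1 hq2 hpi
  have hf0 : 0 < f := one_pos.trans_le hf
  have hq0 : 0 < q := one_pos.trans_le hq1
  set p₀ : Fin n → ℝ := fun j => f⁻¹ * pstar j
  have hp₀ : ∀ j, 0 < p₀ j := fun j => mul_pos (inv_pos.mpr hf0) (hpstar j)
  have hscale : x p₀ ≤ w / f⁻¹ ^ γ :=
    heq ▸ apply_mul_le_div_rpow hincome hpstar (inv_pos.mpr hf0) (inv_le_one_of_one_le₀ hf)
  have hraise : x (update p₀ i (f ^ 2 / q * p₀ i)) ≤ x p₀ * (f ^ 2 / q) ^ (-α) :=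
    apply_update_mul_le_mul_rpow hprice hp₀ ((one_le_div hq0).mpr hq2)
  have hpi' : f ^ 2 / q * p₀ i = p i := by simp only [p₀, hpi]; field_simp
  rw [hpi'] at hraise
  have hcomplements : x p ≤ x (update p₀ i (p i)) := by
    refine apply_le_of_antitone_update_ne hcompl ?_ ?_ (by simp)
    · intro j
      rcases eq_or_ne j i with rfl | hj
      · simpa using (div_pos (hpstar j) hf0).trans_le (hp j).1
      · simpa [hj] using hp₀ j
    · intro j
      rcases eq_or_ne j i with rfl | hj
      · simp
      · simpa [hj, p₀, div_eq_inv_mul] using (hp j).1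
  calc x p ≤ x p₀ * (f ^ 2 / q) ^ (-α) := hcomplements.trans hraise
    _ ≤ w / f⁻¹ ^ γ * (f ^ 2 / q) ^ (-α) := by gcongr
    _ = w * f ^ (γ - 2 * α) * q ^ α := rpow_inv_div_mul_rpow_neg γ α hf0 hq0

/-- Lemma 3, part 2 (f-bounded demand upper bound in a market of complements):
if `x_i(p*) = w_i`, `x_i` is nonincreasing in every coordinate `j ≠ i`,
lowering all prices by a factor `q < 1` raises `x_i` by at most a factor `q^{−γ}`,
and raising the single price `p_i` by a factor `t > 1` lowers `x_i` to at most
`x_i·t^{−α}`, then for any `f`-bounded price vector with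
`p_i = f·p_i*/q`, `1 ≤ q ≤ f²`, we have `x_i(p) ≤ w_i·f^{γ−2α}·q^{α}`. -/
theorem stmt9 (n : ℕ) (hn : 1 ≤ n) (i : Fin n)
    (pstar : Fin n → ℝ) (hpstar : ∀ j, 0 < pstar j)
    (w f γ α : ℝ) (hw : 0 < w) (hf : 1 ≤ f) (hγ : 1 ≤ γ)
    (hα0 : 0 < α) (hα1 : α ≤ 1)
    (x : (Fin n → ℝ) → ℝ)
    (hxpos : ∀ p : Fin n → ℝ, (∀ j, 0 < p j) → 0 < x p)
    (heq : x pstar = w)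
    (hcompl : ∀ p : Fin n → ℝ, (∀ j, 0 < p j) → ∀ j, j ≠ i →
      ∀ c : ℝ, p j ≤ c → x (Function.update p j c) ≤ x p)
    (hincome : ∀ p : Fin n → ℝ, (∀ j, 0 < p j) → ∀ q : ℝ, 0 < q → q < 1 →
      x (fun j => q * p j) ≤ x p / q ^ γ)
    (hprice : ∀ p : Fin n → ℝ, (∀ j, 0 < p j) → ∀ t : ℝ, 1 < t →
      x (Function.update p i (t * p i)) ≤ x p * t ^ (-α)) :
    ∀ p : Fin n → ℝ, (∀ j, pstar j / f ≤ p j ∧ p j ≤ f * pstar j) →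
      ∀ q : ℝ, 1 ≤ q → q ≤ f ^ 2 → p i = f * pstar i / q →
      x p ≤ w * f ^ (γ - 2 * α) * q ^ α :=
  stmt9_general n i pstar hpstar w f γ α hf x heq hcompl hincome hprice
end

section
/- Let n ≥ 1, w ∈ (0,∞)^n, p, p* ∈ (0,∞)^n, 0 < λ ≤ 1, 0 < α ≤ 1 and β > 0. Let f = max_i max(p_i/p_i*, p_i*/p_i) and suppose f^β ≥ 2. Suppose x ∈ (0,∞)^n satisfies, for every i, w_i · f^β · (f·p_i/p_i*)^{−α} ≤ x_i ≤ w_i · f^{−β} · (f·p_i*/p_i)^{α}. Define p'_i = p_i·(1 + λ·min{1, (x_i − w_i)/w_i}) for each i. Then max_i max(p'_i/p_i*, p_i*/p'_i) ≤ (1 − λ/2)·f. -/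
/-!
Normalise coordinate `i` by `r = pᵢ/pᵢ*` and `q = xᵢ/wᵢ`, so that `r, r⁻¹ ≤ f` and the new ratio is
`r (1 + λ min 1 (q - 1))`. Both demand bounds have the shape `r^(1-α) f^(±α)`, which for `α ≤ 1`
lies between `1/f` and `f`; together with `f^β ≥ 2` this gives `r q ≤ f/2` and `r q ≥ 2/f`.
An upward step is then a convex combination of `r ≤ f` and `r q ≤ f/2`, bounded by `(1 - λ/2) f`;
a downward step stays above `(1 + λ)/f`, and `(1 + λ)(1 - λ/2) ≥ 1` for `λ ≤ 1`.
-/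

open Real

section Ratio

variable {f r α : ℝ}

theorem mul_div_rpow_le (hr : 0 < r) (hrf : r ≤ f) (hα1 : α ≤ 1) :
    r * (f / r) ^ α ≤ f := by
  have hf : 0 < f := hr.trans_le hrf
  calc r * (f / r) ^ α = f ^ α * r ^ (1 - α) := by
        rw [div_rpow hf.le hr.le, rpow_sub hr, rpow_one]
        field_simp
    _ ≤ f ^ α * f ^ (1 - α) := by gcongr
    _ = f := by rw [← rpow_add hf]; simp

theorem inv_le_mul_mul_rpow_neg (hr : 0 < r) (hrf : r⁻¹ ≤ f) (hα1 : α ≤ 1) :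
    f⁻¹ ≤ r * (f * r) ^ (-α) := by
  have hf : 0 < f := (inv_pos.mpr hr).trans_le hrf
  have key := mul_div_rpow_le (inv_pos.mpr hr) hrf hα1
  rw [div_inv_eq_mul] at key
  have hpos : 0 < r⁻¹ * (f * r) ^ α := by positivity
  calc f⁻¹ ≤ (r⁻¹ * (f * r) ^ α)⁻¹ := inv_anti₀ hpos key
    _ = r * (f * r) ^ (-α) := by rw [rpow_neg (by positivity), mul_inv, inv_inv]

end Ratio

section Tatonnement

variable {lam f r q c α : ℝ}

theorem tatonnement_ratio_le (hlam0 : 0 < lam) (hlam1 : lam ≤ 1) (hr : 0 < r) (hrf : r ≤ f)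
    (hα1 : α ≤ 1) (hc : 2 ≤ c) (hq : q ≤ c⁻¹ * (f / r) ^ α) :
    r * (1 + lam * min 1 (q - 1)) ≤ (1 - lam / 2) * f := by
  have hf : 0 < f := hr.trans_le hrf
  have hrq : r * q ≤ f / 2 :=
    calc r * q ≤ r * (c⁻¹ * (f / r) ^ α) := by gcongr
      _ = c⁻¹ * (r * (f / r) ^ α) := by ring
      _ ≤ 2⁻¹ * f := by
        gcongr
        exact mul_div_rpow_le hr hrf hα1
      _ = f / 2 := by ring
  calc r * (1 + lam * min 1 (q - 1)) ≤ r * (1 + lam * (q - 1)) := by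
        gcongr
        exact min_le_right _ _
    _ = (1 - lam) * r + lam * (r * q) := by ring
    _ ≤ (1 - lam) * f + lam * (f / 2) := by gcongr
    _ = (1 - lam / 2) * f := by ring

theorem inv_tatonnement_ratio_le (hlam0 : 0 < lam) (hlam1 : lam ≤ 1) (hr : 0 < r)
    (hrf : r⁻¹ ≤ f) (hα1 : α ≤ 1) (hc : 2 ≤ c) (hq : c * (f * r) ^ (-α) ≤ q) :
    (r * (1 + lam * min 1 (q - 1)))⁻¹ ≤ (1 - lam / 2) * f := by
  have hf : 0 < f := (inv_pos.mpr hr).trans_le hrf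
  have hfr : f⁻¹ ≤ r := by rwa [inv_le_comm₀ hf hr]
  have hrq : 2 * f⁻¹ ≤ r * q :=
    calc 2 * f⁻¹ ≤ c * (r * (f * r) ^ (-α)) := by
          gcongr
          exact inv_le_mul_mul_rpow_neg hr hrf hα1
      _ = r * (c * (f * r) ^ (-α)) := by ring
      _ ≤ r * q := by gcongr
  have hstep : (1 + lam) * f⁻¹ ≤ r * (1 + lam * min 1 (q - 1)) := by
    rcases min_cases 1 (q - 1) with ⟨hm, -⟩ | ⟨hm, -⟩ <;> rw [hm]
    · nlinarith
    · nlinarith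
  calc (r * (1 + lam * min 1 (q - 1)))⁻¹ ≤ ((1 + lam) * f⁻¹)⁻¹ :=
        inv_anti₀ (by positivity) hstep
    _ = f / (1 + lam) := by field_simp
    _ ≤ (1 - lam / 2) * f := by
        rw [div_le_iff₀ (by linarith)]
        nlinarith [mul_nonneg hf.le (mul_nonneg hlam0.le (sub_nonneg.2 hlam1))]

end Tatonnement

theorem stmt10_general (n : ℕ) (hn : 0 < n)
    (w p pstar : Fin n → ℝ)
    (hw : ∀ i, 0 < w i) (hp : ∀ i, 0 < p i) (hpstar : ∀ i, 0 < pstar i)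
    (lam α β : ℝ) (hlam0 : 0 < lam) (hlam1 : lam ≤ 1)
    (hα1 : α ≤ 1)
    (f : ℝ)
    (hf : f = Finset.univ.sup'
      (Finset.univ_nonempty_iff.mpr (Fin.pos_iff_nonempty.mp hn))
      (fun i => max (p i / pstar i) (pstar i / p i)))
    (hf2 : 2 ≤ f ^ β)
    (x : Fin n → ℝ)
    (hxlb : ∀ i, w i * f ^ β * (f * p i / pstar i) ^ (-α) ≤ x i)
    (hxub : ∀ i, x i ≤ w i * f ^ (-β) * (f * pstar i / p i) ^ α)
    (p' : Fin n → ℝ)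
    (hp' : ∀ i, p' i = p i * (1 + lam * min 1 ((x i - w i) / w i))) :
    Finset.univ.sup'
      (Finset.univ_nonempty_iff.mpr (Fin.pos_iff_nonempty.mp hn))
      (fun i => max (p' i / pstar i) (pstar i / p' i)) ≤ (1 - lam / 2) * f := by
  refine Finset.sup'_le _ _ fun i _ => ?_
  have hmax : max (p i / pstar i) (pstar i / p i) ≤ f :=
    hf ▸ Finset.le_sup' (fun j => max (p j / pstar j) (pstar j / p j)) (Finset.mem_univ i)
  have hrf : p i / pstar i ≤ f := le_of_max_le_left hmax
  have hrf' : (p i / pstar i)⁻¹ ≤ f := by rw [inv_div]; exact le_of_max_le_right hmax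
  have hr : 0 < p i / pstar i := div_pos (hp i) (hpstar i)
  have hratio : p' i / pstar i = p i / pstar i * (1 + lam * min 1 (x i / w i - 1)) := by
    rw [hp' i, sub_div, div_self (hw i).ne', mul_div_right_comm]
  have hub : x i / w i ≤ (f ^ β)⁻¹ * (f / (p i / pstar i)) ^ α := by
    rw [div_le_iff₀ (hw i), div_div_eq_mul_div, ← rpow_neg (hr.le.trans hrf)]
    linarith [hxub i]
  have hlb : f ^ β * (f * (p i / pstar i)) ^ (-α) ≤ x i / w i := by
    rw [le_div_iff₀ (hw i), ← mul_div_assoc]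
    linarith [hxlb i]
  refine max_le ?_ ?_
  · rw [hratio]
    exact tatonnement_ratio_le hlam0 hlam1 hr hrf hα1 hf2 hub
  · rw [← inv_div, hratio]
    exact inv_tatonnement_ratio_le hlam0 hlam1 hr hrf' hα1 hf2 hlb

/-- Lemma 4, part 1 (one-time market, far-from-equilibrium regime):
if `f^β ≥ 2` and the demands satisfy the `f`-bounded demand bounds for a
market of complements, then one round of tatonnement updates reduces the
price imbalance to at most `(1 − λ/2)·f`. -/
theorem stmt10 (n : ℕ) (hn : 0 < n)
    (w p pstar : Fin n → ℝ)
    (hw : ∀ i, 0 < w i) (hp : ∀ i, 0 < p i) (hpstar : ∀ i, 0 < pstar i)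
    (lam α β : ℝ) (hlam0 : 0 < lam) (hlam1 : lam ≤ 1)
    (hα0 : 0 < α) (hα1 : α ≤ 1) (hβ : 0 < β)
    (f : ℝ)
    (hf : f = Finset.univ.sup'
      (Finset.univ_nonempty_iff.mpr (Fin.pos_iff_nonempty.mp hn))
      (fun i => max (p i / pstar i) (pstar i / p i)))
    (hf2 : 2 ≤ f ^ β)
    (x : Fin n → ℝ) (hx : ∀ i, 0 < x i)
    (hxlb : ∀ i, w i * f ^ β * (f * p i / pstar i) ^ (-α) ≤ x i)
    (hxub : ∀ i, x i ≤ w i * f ^ (-β) * (f * pstar i / p i) ^ α)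
    (p' : Fin n → ℝ)
    (hp' : ∀ i, p' i = p i * (1 + lam * min 1 ((x i - w i) / w i))) :
    Finset.univ.sup'
      (Finset.univ_nonempty_iff.mpr (Fin.pos_iff_nonempty.mp hn))
      (fun i => max (p' i / pstar i) (pstar i / p' i)) ≤ (1 - lam / 2) * f :=
  stmt10_general n hn w p pstar hw hp hpstar lam α β hlam0 hlam1 hα1 f hf hf2 x hxlb hxub p' hp'
end

section
/- Let n ≥ 1, w ∈ (0,∞)^n, p, p* ∈ (0,∞)^n, 0 < λ ≤ 1, 0 < α ≤ 1 and β > 0. Let f = max_i max(p_i/p_i*, p_i*/p_i) and suppose f^β ≤ 2. Suppose x ∈ (0,∞)^n satisfies, for every i, w_i · f^β · (f·p_i/p_i*)^{−α} ≤ x_i ≤ w_i · f^{−β} · (f·p_i*/p_i)^{α}. Define p'_i = p_i·(1 + λ·min{1, (x_i − w_i)/w_i}) for each i. Then max_i max(p'_i/p_i*, p_i*/p'_i) ≤ f^{1 − λβ/(2 ln 2)}. -/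
/-!
Write `r = pᵢ / pᵢ*` and `y = xᵢ / wᵢ`, so that `f⁻¹ ≤ r ≤ f` and the new ratio is
`r (1 + λ min 1 (y - 1))`. Because `α ≤ 1`, the demand bounds give `f^β / f ≤ r y ≤ f^(-β) f`,
hence the new ratio lies between `f⁻¹ (1 + λ (f^β - 1))` and `f (1 + λ (f^(-β) - 1))`; the cap
at `1` is harmless since `f^β ≤ 2`. With `g = f^β ∈ [1, 2]` it remains to compare
`1 + λ (g^(±1) - 1)` with `g^(±λ / (2 ln 2))`, which follows from chords of the convex function
`exp` over intervals of length at most `ln 2`.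
-/

open Real

namespace Tatonnement

theorem exp_mul_le_one_sub_add_mul {u : ℝ} (a : ℝ) (hu0 : 0 ≤ u) (hu1 : u ≤ 1) :
    exp (u * a) ≤ 1 - u + u * exp a := by
  simpa using convexOn_exp.2 (Set.mem_univ 0) (Set.mem_univ a) (sub_nonneg.2 hu1) hu0 (by ring)

theorem exp_neg_le_one_sub_div {s : ℝ} (hs0 : 0 ≤ s) (hs : s ≤ log 2) :
    exp (-s) ≤ 1 - s / (2 * log 2) := by
  have hlog : 0 < log 2 := log_pos one_lt_two
  have h := exp_mul_le_one_sub_add_mul (-log 2) (div_nonneg hs0 hlog.le) ((div_le_one hlog).2 hs)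
  rw [exp_neg, exp_log two_pos, mul_neg, div_mul_cancel₀ _ hlog.ne'] at h
  linarith [show s / log 2 = 2 * (s / (2 * log 2)) by field_simp]

theorem exp_div_le_one_add {y : ℝ} (hy0 : 0 ≤ y) (hy : y ≤ log 2) :
    exp (y / (2 * log 2)) ≤ 1 + y := by
  have hlog : 0 < log 2 := log_pos one_lt_two
  -- `√e < 1.65 < 1 + log 2`
  have hsqrt : exp (1 / 2) ≤ 1 + log 2 := by
    have h : exp (1 / 2) * exp (1 / 2) = exp 1 := by rw [← exp_add]; norm_num
    nlinarith [exp_one_lt_d9, log_two_gt_d9, exp_pos (1 / 2)]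
  have hu0 : 0 ≤ y / log 2 := div_nonneg hy0 hlog.le
  have h := exp_mul_le_one_sub_add_mul (1 / 2) hu0 ((div_le_one hlog).2 hy)
  calc exp (y / (2 * log 2)) = exp (y / log 2 * (1 / 2)) := by ring_nf
    _ ≤ 1 - y / log 2 + y / log 2 * exp (1 / 2) := h
    _ ≤ 1 - y / log 2 + y / log 2 * (1 + log 2) := by gcongr
    _ = 1 + y := by field_simp; ring

theorem one_add_mul_inv_sub_one_le_inv_rpow {g lam : ℝ} (hg1 : 1 ≤ g) (hg2 : g ≤ 2)
    (hlam : 0 ≤ lam) : 1 + lam * (g⁻¹ - 1) ≤ (g ^ (lam / (2 * log 2)))⁻¹ := by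
  have hg : 0 < g := by linarith
  have hs0 : 0 ≤ log g := log_nonneg hg1
  have hs2 : log g ≤ log 2 := log_le_log hg hg2
  rw [← rpow_neg hg.le, rpow_def_of_pos hg, ← exp_log (inv_pos.2 hg), log_inv]
  calc 1 + lam * (exp (-log g) - 1) ≤ 1 + lam * (-(log g / (2 * log 2))) := by
        gcongr; linarith [exp_neg_le_one_sub_div hs0 hs2]
    _ = -(log g * (lam / (2 * log 2))) + 1 := by ring
    _ ≤ exp (log g * -(lam / (2 * log 2))) := by rw [mul_neg]; exact add_one_le_exp _

theorem rpow_le_one_add_mul_sub_one {g lam : ℝ} (hg1 : 1 ≤ g) (hg2 : g ≤ 2)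
    (hlam0 : 0 ≤ lam) (hlam1 : lam ≤ 1) : g ^ (lam / (2 * log 2)) ≤ 1 + lam * (g - 1) := by
  have hg : 0 < g := by linarith
  have hs0 : 0 ≤ log g := log_nonneg hg1
  have hs2 : log g ≤ log 2 := log_le_log hg hg2
  have hls : lam * log g ≤ log g := mul_le_of_le_one_left hs0 hlam1
  rw [rpow_def_of_pos hg]
  calc exp (log g * (lam / (2 * log 2))) = exp (lam * log g / (2 * log 2)) := by ring_nf
    _ ≤ 1 + lam * log g := exp_div_le_one_add (mul_nonneg hlam0 hs0) (hls.trans hs2)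
    _ ≤ 1 + lam * (g - 1) := by gcongr; exact log_le_sub_one_of_pos hg

theorem mul_rpow_div_le {r f α : ℝ} (hr : 0 < r) (hrf : r ≤ f) (hα : α ≤ 1) :
    r * (f / r) ^ α ≤ f :=
  calc r * (f / r) ^ α ≤ r * (f / r) ^ (1 : ℝ) := by
        gcongr
        exact (one_le_div hr).2 hrf
    _ = f := by rw [rpow_one, mul_div_cancel₀ _ hr.ne']

theorem inv_le_mul_mul_rpow_neg {r f α : ℝ} (hr : 0 < r) (hf : 0 < f) (hfr : f⁻¹ ≤ r)
    (hα : α ≤ 1) : f⁻¹ ≤ r * (f * r) ^ (-α) :=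
  calc f⁻¹ = r * (f * r) ^ (-1 : ℝ) := by rw [rpow_neg_one]; field_simp
    _ ≤ r * (f * r) ^ (-α) := by
        gcongr
        exact (inv_le_iff_one_le_mul₀' hf).1 hfr

section Update

variable {f r y α β lam : ℝ}

theorem mul_one_add_mul_min_le (hr : 0 < r) (hrf : r ≤ f) (hα : α ≤ 1) (hlam0 : 0 ≤ lam)
    (hlam1 : lam ≤ 1) (hy : y ≤ f ^ (-β) * (f / r) ^ α) :
    r * (1 + lam * min 1 (y - 1)) ≤ f * (1 + lam * (f ^ (-β) - 1)) := by
  have hry : r * y ≤ f ^ (-β) * f :=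
    calc r * y ≤ f ^ (-β) * (r * (f / r) ^ α) := by nlinarith
      _ ≤ f ^ (-β) * f :=
        mul_le_mul_of_nonneg_left (mul_rpow_div_le hr hrf hα) (rpow_nonneg (hr.le.trans hrf) _)
  calc r * (1 + lam * min 1 (y - 1)) ≤ r * (1 + lam * (y - 1)) := by
        gcongr; exact min_le_right _ _
    _ = (1 - lam) * r + lam * (r * y) := by ring
    _ ≤ (1 - lam) * f + lam * (f ^ (-β) * f) := by gcongr
    _ = f * (1 + lam * (f ^ (-β) - 1)) := by ring

theorem inv_mul_le_mul_one_add_mul_min (hr : 0 < r) (hf : 0 < f) (hfr : f⁻¹ ≤ r) (hα : α ≤ 1)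
    (hlam0 : 0 ≤ lam) (hlam1 : lam ≤ 1) (hfβ : f ^ β ≤ 2) (hy : f ^ β * (f * r) ^ (-α) ≤ y) :
    f⁻¹ * (1 + lam * (f ^ β - 1)) ≤ r * (1 + lam * min 1 (y - 1)) := by
  have hg : 0 ≤ f ^ β := rpow_nonneg hf.le β
  rcases min_cases 1 (y - 1) with ⟨hmin, -⟩ | ⟨hmin, -⟩ <;> rw [hmin]
  · calc f⁻¹ * (1 + lam * (f ^ β - 1)) ≤ f⁻¹ * (1 + lam * 1) := by gcongr; linarith
      _ ≤ r * (1 + lam * 1) := by gcongr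
  · have hry : f ^ β * f⁻¹ ≤ r * y :=
      calc f ^ β * f⁻¹ ≤ f ^ β * (r * (f * r) ^ (-α)) := by
            gcongr; exact inv_le_mul_mul_rpow_neg hr hf hfr hα
        _ ≤ r * y := by nlinarith
    calc f⁻¹ * (1 + lam * (f ^ β - 1)) = (1 - lam) * f⁻¹ + lam * (f ^ β * f⁻¹) := by ring
      _ ≤ (1 - lam) * r + lam * (r * y) := by gcongr
      _ = r * (1 + lam * (y - 1)) := by ring

theorem mul_one_add_mul_rpow_neg_sub_one_le (hf : 1 ≤ f) (hβ : 0 ≤ β) (hfβ : f ^ β ≤ 2)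
    (hlam : 0 ≤ lam) :
    f * (1 + lam * (f ^ (-β) - 1)) ≤ f ^ (1 - lam * β / (2 * log 2)) := by
  have hf0 : 0 < f := by linarith
  rw [rpow_sub hf0, rpow_one, show lam * β / (2 * log 2) = β * (lam / (2 * log 2)) by ring,
    rpow_mul hf0.le, div_eq_mul_inv, rpow_neg hf0.le]
  gcongr
  exact one_add_mul_inv_sub_one_le_inv_rpow (one_le_rpow hf hβ) hfβ hlam

theorem inv_rpow_one_sub_le (hf : 1 ≤ f) (hβ : 0 ≤ β) (hfβ : f ^ β ≤ 2) (hlam0 : 0 ≤ lam)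
    (hlam1 : lam ≤ 1) :
    (f ^ (1 - lam * β / (2 * log 2)))⁻¹ ≤ f⁻¹ * (1 + lam * (f ^ β - 1)) := by
  have hf0 : 0 < f := by linarith
  rw [rpow_sub hf0, rpow_one, show lam * β / (2 * log 2) = β * (lam / (2 * log 2)) by ring,
    rpow_mul hf0.le, inv_div, div_eq_inv_mul]
  gcongr
  exact rpow_le_one_add_mul_sub_one (one_le_rpow hf hβ) hfβ hlam0 hlam1

theorem max_mul_one_add_mul_min_inv_le (hf : 1 ≤ f) (hr : 0 < r) (hrf : r ≤ f)
    (hfr : f⁻¹ ≤ r) (hα : α ≤ 1) (hβ : 0 ≤ β) (hfβ : f ^ β ≤ 2) (hlam0 : 0 ≤ lam)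
    (hlam1 : lam ≤ 1) (hylb : f ^ β * (f * r) ^ (-α) ≤ y) (hyub : y ≤ f ^ (-β) * (f / r) ^ α) :
    max (r * (1 + lam * min 1 (y - 1))) (r * (1 + lam * min 1 (y - 1)))⁻¹ ≤
      f ^ (1 - lam * β / (2 * log 2)) := by
  have hf0 : 0 < f := by linarith
  refine max_le ((mul_one_add_mul_min_le hr hrf hα hlam0 hlam1 hyub).trans
    (mul_one_add_mul_rpow_neg_sub_one_le hf hβ hfβ hlam0)) (inv_le_of_inv_le₀ (by positivity) ?_)
  exact (inv_rpow_one_sub_le hf hβ hfβ hlam0 hlam1).trans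
    (inv_mul_le_mul_one_add_mul_min hr hf0 hfr hα hlam0 hlam1 hfβ hylb)

end Update

end Tatonnement

open Tatonnement

theorem stmt11_general (n : ℕ) (hn : 0 < n)
    (w p pstar : Fin n → ℝ)
    (hw : ∀ i, 0 < w i) (hp : ∀ i, 0 < p i) (hpstar : ∀ i, 0 < pstar i)
    (lam α β : ℝ) (hlam0 : 0 < lam) (hlam1 : lam ≤ 1)
    (hα1 : α ≤ 1) (hβ : 0 < β)
    (f : ℝ)
    (hf : f = Finset.univ.sup'
      (Finset.univ_nonempty_iff.mpr (Fin.pos_iff_nonempty.mp hn))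
      (fun i => max (p i / pstar i) (pstar i / p i)))
    (hf2 : f ^ β ≤ 2)
    (x : Fin n → ℝ)
    (hxlb : ∀ i, w i * f ^ β * (f * p i / pstar i) ^ (-α) ≤ x i)
    (hxub : ∀ i, x i ≤ w i * f ^ (-β) * (f * pstar i / p i) ^ α)
    (p' : Fin n → ℝ)
    (hp' : ∀ i, p' i = p i * (1 + lam * min 1 ((x i - w i) / w i))) :
    Finset.univ.sup'
      (Finset.univ_nonempty_iff.mpr (Fin.pos_iff_nonempty.mp hn))
      (fun i => max (p' i / pstar i) (pstar i / p' i)) ≤ f ^ (1 - lam * β / (2 * Real.log 2)) := by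
  have hratio (i : Fin n) : p i / pstar i ≤ f ∧ f⁻¹ ≤ p i / pstar i := by
    have h := hf ▸ Finset.le_sup' (fun j => max (p j / pstar j) (pstar j / p j)) (Finset.mem_univ i)
    rw [← inv_div (p i) (pstar i), max_le_iff] at h
    exact ⟨h.1, inv_le_of_inv_le₀ (div_pos (hp i) (hpstar i)) h.2⟩
  have hf0 : 0 < f := (div_pos (hp ⟨0, hn⟩) (hpstar ⟨0, hn⟩)).trans_le (hratio ⟨0, hn⟩).1
  have hf1 : 1 ≤ f := by
    have h := (inv_le_iff_one_le_mul₀' hf0).1 ((hratio ⟨0, hn⟩).2.trans (hratio ⟨0, hn⟩).1)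
    nlinarith
  refine Finset.sup'_le _ _ fun i _ => ?_
  obtain ⟨hrf, hfr⟩ := hratio i
  have hr : 0 < p i / pstar i := div_pos (hp i) (hpstar i)
  have hq : p' i / pstar i = p i / pstar i * (1 + lam * min 1 (x i / w i - 1)) := by
    rw [hp' i, sub_div, div_self (hw i).ne']; ring
  have hylb : f ^ β * (f * (p i / pstar i)) ^ (-α) ≤ x i / w i := by
    rw [le_div_iff₀ (hw i), ← mul_div_assoc]; linarith [hxlb i]
  have hyub : x i / w i ≤ f ^ (-β) * (f / (p i / pstar i)) ^ α := by
    rw [div_le_iff₀ (hw i), div_div_eq_mul_div]; linarith [hxub i]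
  rw [← inv_div (p' i) (pstar i), hq]
  exact max_mul_one_add_mul_min_inv_le hf1 hr hrf hfr hα1 hβ.le hf2 hlam0.le hlam1 hylb hyub

/-- Lemma 4, part 2 (one-time market, near-equilibrium regime):
if `f^β ≤ 2` and the demands satisfy the `f`-bounded demand bounds for a
market of complements, then one round of tatonnement updates reduces the
price imbalance to at most `f^{1 − λβ/(2 ln 2)}`. -/
theorem stmt11 (n : ℕ) (hn : 0 < n)
    (w p pstar : Fin n → ℝ)
    (hw : ∀ i, 0 < w i) (hp : ∀ i, 0 < p i) (hpstar : ∀ i, 0 < pstar i)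
    (lam α β : ℝ) (hlam0 : 0 < lam) (hlam1 : lam ≤ 1)
    (hα0 : 0 < α) (hα1 : α ≤ 1) (hβ : 0 < β)
    (f : ℝ)
    (hf : f = Finset.univ.sup'
      (Finset.univ_nonempty_iff.mpr (Fin.pos_iff_nonempty.mp hn))
      (fun i => max (p i / pstar i) (pstar i / p i)))
    (hf2 : f ^ β ≤ 2)
    (x : Fin n → ℝ) (hx : ∀ i, 0 < x i)
    (hxlb : ∀ i, w i * f ^ β * (f * p i / pstar i) ^ (-α) ≤ x i)
    (hxub : ∀ i, x i ≤ w i * f ^ (-β) * (f * pstar i / p i) ^ α)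
    (p' : Fin n → ℝ)
    (hp' : ∀ i, p' i = p i * (1 + lam * min 1 ((x i - w i) / w i))) :
    Finset.univ.sup'
      (Finset.univ_nonempty_iff.mpr (Fin.pos_iff_nonempty.mp hn))
      (fun i => max (p' i / pstar i) (pstar i / p' i)) ≤ f ^ (1 - lam * β / (2 * Real.log 2)) :=
  stmt11_general n hn w p pstar hw hp hpstar lam α β hlam0 hlam1 hα1 hβ f hf hf2 x hxlb hxub p' hp'
end

section
/- Let n ≥ 1, w ∈ (0,∞)^n, p, p* ∈ (0,∞)^n, E ≥ 1, 0 < λ ≤ 1/(2E − 1) and β > 0. Let f = max_i max(p_i/p_i*, p_i*/p_i). Suppose x ∈ (0,∞)^n satisfies, for every i, w_i · f^β · (f·p_i/p_i*)^{−E} ≤ x_i ≤ w_i · f^{−β} · (f·p_i*/p_i)^{E}. Define p'_i = p_i·(1 + λ·min{1, (x_i − w_i)/w_i}) for each i, and let f' = max_i max(p'_i/p_i*, p_i*/p'_i). Then: (1) if f^β ≥ 2 then f' ≤ (1 − λ/2)·f; (2) if f^β ≤ 2 then f' ≤ f^{1 − λβ/(2 ln 2)}. -/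
/-!
Write `K = f^β`. For a good with `s = f·p*/p ≥ 1` and `v = f·p/p* ≥ 1`, the demand bounds give
`K v^{-E} ≤ x/w ≤ K⁻¹ s^E`, so `f' ≤ c·f` as soon as
`1 + λ·min(1, K⁻¹ s^E − 1) ≤ c·s` and `1 ≤ c·v·(1 + λ·min(1, K v^{-E} − 1))` for all `s, v ≥ 1`.
By convexity of `s ↦ s^E` the first inequality need only be checked at `s = 1` and at
`s = (1 + λ)/c`. For the second, `v ↦ v·(1 − λ + λ K v^{-E})` is increasing where `K v^{-E} ≤ 2`
because `λ(2E − 1) ≤ 1`, so it reduces to the left end of that region. Call `c` admissible when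
these endpoint conditions hold: `1 − λ/2` is admissible when `K ≥ 2`, and `f^{−λβ/(2 ln 2)}` is
admissible when `K ≤ 2`, by Bernoulli's inequality and convexity of `exp`.
-/

open Real Set

structure AdmissibleFactor (lam E K c : ℝ) : Prop where
  pos : 0 < c
  at_one : 1 - lam + lam * K⁻¹ ≤ c
  cap : K⁻¹ * ((1 + lam) / c) ^ E ≤ 2
  one_le_mul_min : 1 ≤ c * min (1 + lam) (1 - lam + lam * K)

lemma one_le_max_div_div {a b : ℝ} (ha : 0 < a) (hb : 0 < b) : 1 ≤ max (a / b) (b / a) := by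
  rcases le_total a b with h | h
  · exact le_max_of_le_right ((one_le_div ha).2 h)
  · exact le_max_of_le_left ((one_le_div hb).2 h)

lemma exp_mul_le_one_sub_add_mul_exp {t y : ℝ} (ht0 : 0 ≤ t) (ht1 : t ≤ 1) :
    exp (t * y) ≤ 1 - t + t * exp y := by
  simpa using convexOn_exp.2 (mem_univ 0) (mem_univ y) (sub_nonneg.2 ht1) ht0 (by ring)

lemma one_add_mul_sub_le_rpow_of_nonpos {x q : ℝ} (hx : 0 < x) (hq : q ≤ 0) :
    1 + q * (x - 1) ≤ x ^ q := by
  rw [rpow_def_of_pos hx]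
  nlinarith [add_one_le_exp (log x * q), log_le_sub_one_of_pos hx]

lemma rpow_le_inv_of_mul_one_sub_le {E q y : ℝ} (hE : 1 ≤ E) (hq : 0 < q)
    (hy : 0 ≤ y) (h : y * (1 - (1 - q) / E) ≤ 1) : y ^ E ≤ q⁻¹ := by
  have hE0 : 0 < E := by linarith
  have hbern : q ^ E⁻¹ ≤ 1 - (1 - q) / E := by
    have := rpow_one_add_le_one_add_mul_self (s := q - 1) (by linarith) (inv_nonneg.2 hE0.le)
      (inv_le_one_of_one_le₀ hE)
    rw [add_sub_cancel] at this
    linarith [show E⁻¹ * (q - 1) = -((1 - q) / E) by ring]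
  have : (y * q ^ E⁻¹) ^ E ≤ 1 :=
    rpow_le_one (by positivity) ((mul_le_mul_of_nonneg_left hbern hy).trans h) hE0.le
  rw [mul_rpow hy (by positivity), rpow_inv_rpow hq.le hE0.ne'] at this
  rwa [← one_div, le_div_iff₀ hq]

lemma one_add_mul_min_le_mul {lam E κ c s : ℝ} (hE : 1 ≤ E) (hlam : 0 ≤ lam) (hκ : 0 ≤ κ)
    (hc : 0 < c) (h_one : 1 - lam + lam * κ ≤ c) (h_cap : κ * ((1 + lam) / c) ^ E ≤ 2)
    (hs : 1 ≤ s) :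
    1 + lam * min 1 (κ * s ^ E - 1) ≤ c * s := by
  by_cases hcs : 1 + lam ≤ c * s
  · nlinarith [min_le_left 1 (κ * s ^ E - 1)]
  set s₁ := (1 + lam) / c
  have hs₁ : s ≤ s₁ := (le_div_iff₀ hc).2 (by linarith)
  have hφ : ConvexOn ℝ (Ici 0) fun t : ℝ => lam * κ * t ^ E - c * t :=
    ((convexOn_rpow hE).smul (mul_nonneg hlam hκ)).sub ((concaveOn_id (convex_Ici 0)).smul hc.le)
  have hmax := hφ.le_max_of_mem_Icc (x := 1) (y := s₁) (by simp) (by simp; positivity) ⟨hs, hs₁⟩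
  have hcs₁ : c * s₁ = 1 + lam := mul_div_cancel₀ _ hc.ne'
  simp only [one_rpow, mul_one] at hmax
  have : lam * κ * s ^ E - c * s ≤ lam - 1 := by
    refine hmax.trans (max_le (by linarith) ?_)
    rw [hcs₁]; nlinarith
  nlinarith [min_le_right 1 (κ * s ^ E - 1)]

lemma mul_one_sub_add_mul_rpow_neg_le {lam E K a v : ℝ} (hE : 1 ≤ E) (hlam : 0 ≤ lam)
    (hlamE : lam * (2 * E - 1) ≤ 1) (hK : 0 ≤ K) (ha : 0 < a) (hav : a ≤ v)
    (hcap : K * a ^ (-E) ≤ 2) :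
    a * (1 - lam + lam * (K * a ^ (-E))) ≤ v * (1 - lam + lam * (K * v ^ (-E))) := by
  set y := v / a
  have hy : 1 ≤ y := (one_le_div ha).2 hav
  have hv : v = a * y := (mul_div_cancel₀ v ha.ne').symm
  set T := K * a ^ (-E)
  have hT : 0 ≤ T := by positivity
  have hbern := one_add_mul_sub_le_rpow_of_nonpos (x := y) (q := 1 - E) (by linarith) (by linarith)
  rw [sub_eq_add_neg, rpow_add (by linarith), rpow_one, ← sub_eq_add_neg] at hbern
  have hslope : 0 ≤ (y - 1) * (1 - lam - lam * T * (E - 1)) :=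
    mul_nonneg (by linarith)
      (by nlinarith [mul_nonneg (mul_nonneg hlam (sub_nonneg.2 hE)) (sub_nonneg.2 hcap)])
  have key : 1 - lam + lam * T ≤ y * (1 - lam + lam * (T * y ^ (-E))) := by
    nlinarith [mul_le_mul_of_nonneg_left hbern (mul_nonneg hlam hT)]
  calc a * (1 - lam + lam * T) ≤ a * (y * (1 - lam + lam * (T * y ^ (-E)))) :=
        mul_le_mul_of_nonneg_left key ha.le
    _ = v * (1 - lam + lam * (K * v ^ (-E))) := by
        rw [hv, mul_rpow ha.le (by linarith)]; ring

lemma min_le_mul_one_add_mul_min {lam E K v : ℝ} (hE : 1 ≤ E) (hlam : 0 ≤ lam)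
    (hlamE : lam * (2 * E - 1) ≤ 1) (hK : 0 < K) (hv : 1 ≤ v) :
    min (1 + lam) (1 - lam + lam * K) ≤ v * (1 + lam * min 1 (K * v ^ (-E) - 1)) := by
  rcases le_total 2 (K * v ^ (-E)) with hv2 | hv2
  · rw [min_eq_left (show (1 : ℝ) ≤ K * v ^ (-E) - 1 by linarith)]
    nlinarith [min_le_left (1 + lam) (1 - lam + lam * K)]
  rw [min_eq_right (show K * v ^ (-E) - 1 ≤ 1 by linarith),
    show 1 + lam * (K * v ^ (-E) - 1) = 1 - lam + lam * (K * v ^ (-E)) by ring]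
  by_cases hK2 : K ≤ 2
  · have := mul_one_sub_add_mul_rpow_neg_le hE hlam hlamE hK.le one_pos hv (by simpa using hK2)
    simp only [one_rpow, mul_one, one_mul] at this
    exact (min_le_right _ _).trans this
  have hE0 : 0 < E := by linarith
  set a := (K / 2) ^ E⁻¹
  have haE : a ^ E = K / 2 := rpow_inv_rpow (by positivity) hE0.ne'
  have ha1 : 1 ≤ a := one_le_rpow (by linarith) (by positivity)
  have hKa : K * a ^ (-E) = 2 := by
    rw [rpow_neg (by positivity), haE]; field_simp
  have hav : a ≤ v := by
    rw [rpow_neg (by positivity), ← div_eq_mul_inv, div_le_iff₀ (by positivity)] at hv2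
    exact (rpow_le_rpow_iff (by positivity) (by positivity) hE0).1 (by linarith)
  have := mul_one_sub_add_mul_rpow_neg_le hE hlam hlamE hK.le (by positivity) hav hKa.le
  rw [hKa] at this
  nlinarith [min_le_left (1 + lam) (1 - lam + lam * K)]

section
variable {lam E K c f p q w x : ℝ}

lemma AdmissibleFactor.mul_update_div_le (hc : AdmissibleFactor lam E K c) (hE : 1 ≤ E)
    (hlam : 0 ≤ lam) (hK : 0 < K) (hp : 0 < p) (hq : 0 < q) (hw : 0 < w) (hpf : p / q ≤ f)
    (hx : x ≤ w * K⁻¹ * (f * q / p) ^ E) :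
    p * (1 + lam * min 1 ((x - w) / w)) / q ≤ c * f := by
  set s := f * q / p with hs_def
  have hs : 1 ≤ s := by
    rw [le_div_iff₀ hp, one_mul]; rwa [div_le_iff₀ hq] at hpf
  have hxw : (x - w) / w ≤ K⁻¹ * s ^ E - 1 := by
    rw [sub_div, div_self hw.ne', sub_le_sub_iff_right, div_le_iff₀ hw]; linarith
  have hbound := one_add_mul_min_le_mul hE hlam (inv_nonneg.2 hK.le) hc.pos hc.at_one hc.cap hs
  calc p * (1 + lam * min 1 ((x - w) / w)) / q ≤ p * (c * s) / q := by
        gcongr; exact le_trans (by gcongr) hbound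
    _ = c * f := by rw [hs_def]; field_simp

lemma AdmissibleFactor.div_mul_update_le (hc : AdmissibleFactor lam E K c) (hE : 1 ≤ E)
    (hlam : 0 ≤ lam) (hlamE : lam * (2 * E - 1) ≤ 1) (hK : 0 < K) (hp : 0 < p) (hq : 0 < q)
    (hw : 0 < w) (hqf : q / p ≤ f) (hx : w * K * (f * p / q) ^ (-E) ≤ x) :
    q / (p * (1 + lam * min 1 ((x - w) / w))) ≤ c * f := by
  set v := f * p / q with hv_def
  set u := 1 + lam * min 1 ((x - w) / w) with hu_def
  have hv : 1 ≤ v := by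
    rw [le_div_iff₀ hq, one_mul]; rwa [div_le_iff₀ hp] at hqf
  have hxw : K * v ^ (-E) - 1 ≤ (x - w) / w := by
    rw [sub_div, div_self hw.ne', sub_le_sub_iff_right, le_div_iff₀ hw]; linarith
  have hvu : 1 ≤ c * (v * u) := hc.one_le_mul_min.trans <| mul_le_mul_of_nonneg_left
    ((min_le_mul_one_add_mul_min hE hlam hlamE hK hv).trans (by rw [hu_def]; gcongr)) hc.pos.le
  have hu : 0 < u :=
    pos_of_mul_pos_right (pos_of_mul_pos_right (one_pos.trans_le hvu) hc.pos.le) (by positivity)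
  rw [div_le_iff₀ (by positivity)]
  calc q ≤ q * (c * (v * u)) := le_mul_of_one_le_right hq.le hvu
    _ = c * f * (p * u) := by rw [hv_def]; field_simp
end

lemma admissibleFactor_one_sub_half {lam E K : ℝ} (hE : 1 ≤ E) (hlam : 0 ≤ lam)
    (hlamE : lam * (2 * E - 1) ≤ 1) (hK : 2 ≤ K) : AdmissibleFactor lam E K (1 - lam / 2) := by
  have hlam1 : lam ≤ 1 := by nlinarith
  have hKinv : K⁻¹ ≤ 2⁻¹ := inv_anti₀ two_pos hK
  have hc : 0 < 1 - lam / 2 := by linarith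
  refine ⟨hc, by nlinarith, ?_, ?_⟩
  · have hstep : (1 + lam) * (1 - (1 - 4⁻¹) / E) ≤ 1 - lam / 2 := by
      rw [show (1 + lam) * (1 - (1 - 4⁻¹) / E) = (1 + lam) * (4 * E - 3) / (4 * E) by
        field_simp; ring, div_le_iff₀ (by positivity)]
      nlinarith
    have hpow : ((1 + lam) / (1 - lam / 2)) ^ E ≤ 4 := by
      simpa using rpow_le_inv_of_mul_one_sub_le (q := 4⁻¹) hE (by norm_num) (by positivity)
        (by rwa [div_mul_eq_mul_div, div_le_one hc])
    nlinarith [rpow_nonneg (show 0 ≤ (1 + lam) / (1 - lam / 2) by positivity) E]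
  · rw [min_eq_left (by nlinarith)]
    nlinarith

lemma admissibleFactor_exp {lam E z : ℝ} (hE : 1 ≤ E) (hlam : 0 ≤ lam)
    (hlamE : lam * (2 * E - 1) ≤ 1) (hz0 : 0 ≤ z) (hz : z ≤ log 2) :
    AdmissibleFactor lam E (exp z) (exp (-(lam * z / (2 * log 2)))) := by
  have hlam1 : lam ≤ 1 := by nlinarith
  have hlog2 : 1 / 2 < log 2 := by linarith [log_two_gt_d9]
  have hc_ge : 1 - lam * z / (2 * log 2) ≤ exp (-(lam * z / (2 * log 2))) := by
    linarith [add_one_le_exp (-(lam * z / (2 * log 2)))]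
  refine ⟨exp_pos _, ?_, ?_, ?_⟩
  · have hchord := exp_mul_le_one_sub_add_mul_exp (t := z / log 2) (y := -log 2)
      (by positivity) ((div_le_one (by positivity)).2 hz)
    rw [show z / log 2 * -log 2 = -z by field_simp, exp_neg, exp_neg, exp_log two_pos] at hchord
    calc 1 - lam + lam * (exp z)⁻¹ ≤ 1 - lam + lam * (1 - z / (2 * log 2)) := by
          gcongr; exact hchord.trans_eq (by ring)
      _ = 1 - lam * z / (2 * log 2) := by ring
      _ ≤ _ := hc_ge
  · have hpow : (1 + lam) ^ E ≤ 2 := by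
      refine (rpow_le_inv_of_mul_one_sub_le (q := 2⁻¹) hE (by norm_num) (by positivity) ?_).trans_eq
        (inv_inv _)
      rw [show (1 + lam) * (1 - (1 - 2⁻¹) / E) = (1 + lam) * (2 * E - 1) / (2 * E) by
        field_simp; ring, div_le_one (by positivity)]
      nlinarith
    have hexp : exp (lam * z * E / (2 * log 2) - z) ≤ 1 := by
      rw [exp_le_one_iff, sub_nonpos, div_le_iff₀ (by positivity)]
      nlinarith [mul_nonneg hz0 hlam]
    calc (exp z)⁻¹ * ((1 + lam) / exp (-(lam * z / (2 * log 2)))) ^ E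
        = (1 + lam) ^ E * exp (lam * z * E / (2 * log 2) - z) := by
          rw [div_rpow (by positivity) (exp_pos _).le, ← exp_mul, exp_sub,
            show -(lam * z / (2 * log 2)) * E = -(lam * z * E / (2 * log 2)) by ring, exp_neg]
          field_simp
      _ ≤ 2 * 1 := mul_le_mul hpow hexp (exp_pos _).le zero_le_two
      _ = 2 := mul_one 2
  · rw [mul_min_of_nonneg _ _ (exp_pos _).le]
    have hc_half : 1 - lam / 2 ≤ exp (-(lam * z / (2 * log 2))) := by
      refine le_trans ?_ hc_ge
      rw [sub_le_sub_iff_left, div_le_div_iff₀ (by positivity) two_pos]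
      nlinarith
    refine le_min (by nlinarith) ?_
    have hchord := exp_mul_le_one_sub_add_mul_exp (t := lam / (2 * log 2)) (y := z)
      (by positivity) ((div_le_one (by positivity)).2 (by linarith))
    have hmono : lam / (2 * log 2) ≤ lam := div_le_self hlam (by linarith)
    have : exp (lam / (2 * log 2) * z) ≤ 1 - lam + lam * exp z := by
      nlinarith [one_le_exp hz0]
    calc (1 : ℝ) = exp (-(lam * z / (2 * log 2))) * exp (lam / (2 * log 2) * z) := by
          rw [← exp_add]; ring_nf; simp
      _ ≤ _ := mul_le_mul_of_nonneg_left this (exp_pos _).le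

theorem stmt12_general (n : ℕ) (hn : 0 < n)
    (w p pstar : Fin n → ℝ)
    (hw : ∀ i, 0 < w i) (hp : ∀ i, 0 < p i) (hpstar : ∀ i, 0 < pstar i)
    (lam E β : ℝ) (hE : 1 ≤ E) (hlam0 : 0 < lam)
    (hlam1 : lam ≤ 1 / (2 * E - 1)) (hβ : 0 < β)
    (f : ℝ)
    (hf : f = Finset.univ.sup'
      (Finset.univ_nonempty_iff.mpr (Fin.pos_iff_nonempty.mp hn))
      (fun i => max (p i / pstar i) (pstar i / p i)))
    (x : Fin n → ℝ)
    (hxlb : ∀ i, w i * f ^ β * (f * p i / pstar i) ^ (-E) ≤ x i)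
    (hxub : ∀ i, x i ≤ w i * f ^ (-β) * (f * pstar i / p i) ^ E)
    (p' : Fin n → ℝ)
    (hp' : ∀ i, p' i = p i * (1 + lam * min 1 ((x i - w i) / w i)))
    (f' : ℝ)
    (hf' : f' = Finset.univ.sup'
      (Finset.univ_nonempty_iff.mpr (Fin.pos_iff_nonempty.mp hn))
      (fun i => max (p' i / pstar i) (pstar i / p' i))) :
    (2 ≤ f ^ β → f' ≤ (1 - lam / 2) * f) ∧
    (f ^ β ≤ 2 → f' ≤ f ^ (1 - lam * β / (2 * Real.log 2))) := by
  have hlamE : lam * (2 * E - 1) ≤ 1 := by rwa [le_div_iff₀ (by linarith)] at hlam1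
  have hle_f : ∀ i, max (p i / pstar i) (pstar i / p i) ≤ f := fun i =>
    hf ▸ Finset.le_sup' (fun j => max (p j / pstar j) (pstar j / p j)) (Finset.mem_univ i)
  obtain ⟨i₀⟩ := Fin.pos_iff_nonempty.mp hn
  have hf1 : 1 ≤ f := (one_le_max_div_div (hp i₀) (hpstar i₀)).trans (hle_f i₀)
  have hf0 : 0 < f := by linarith
  have hK : 0 < f ^ β := rpow_pos_of_pos hf0 β
  simp only [rpow_neg hf0.le] at hxub
  have hcontract : ∀ c, AdmissibleFactor lam E (f ^ β) c → f' ≤ c * f := fun c hc => by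
    rw [hf']
    refine Finset.sup'_le _ _ fun i _ => ?_
    rw [hp' i]
    exact max_le
      (hc.mul_update_div_le hE hlam0.le hK (hp i) (hpstar i) (hw i)
        ((le_max_left _ _).trans (hle_f i)) (hxub i))
      (hc.div_mul_update_le hE hlam0.le hlamE hK (hp i) (hpstar i) (hw i)
        ((le_max_right _ _).trans (hle_f i)) (hxlb i))
  refine ⟨fun h2 => hcontract _ (admissibleFactor_one_sub_half hE hlam0.le hlamE h2), fun h2 => ?_⟩
  rw [rpow_def_of_pos hf0] at hcontract h2 ⊢
  have hz0 : 0 ≤ log f * β := mul_nonneg (log_nonneg hf1) hβ.le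
  have hz : log f * β ≤ log 2 := by rwa [le_log_iff_exp_le two_pos]
  calc f' ≤ exp (-(lam * (log f * β) / (2 * log 2))) * f :=
        hcontract _ (admissibleFactor_exp hE hlam0.le hlamE hz0 hz)
    _ = exp (log f * (1 - lam * β / (2 * log 2))) := by
        rw [show log f * (1 - lam * β / (2 * log 2)) = -(lam * (log f * β) / (2 * log 2)) + log f
          by ring, exp_add, exp_log hf0]

/-- Lemma 15 (one-time market convergence with mixed substitutes and
complements): with `E ≥ 1` an upper bound on price elasticities,
`β > 0` a lower bound on the Adverse Market Elasticity, and
`0 < λ ≤ 1/(2E − 1)`, one round of tatonnement updates reduces the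
price imbalance `f` to `(1 − λ/2)·f` when `f^β ≥ 2`, and to
`f^{1 − λβ/(2 ln 2)}` when `f^β ≤ 2`. -/
theorem stmt12 (n : ℕ) (hn : 0 < n)
    (w p pstar : Fin n → ℝ)
    (hw : ∀ i, 0 < w i) (hp : ∀ i, 0 < p i) (hpstar : ∀ i, 0 < pstar i)
    (lam E β : ℝ) (hE : 1 ≤ E) (hlam0 : 0 < lam)
    (hlam1 : lam ≤ 1 / (2 * E - 1)) (hβ : 0 < β)
    (f : ℝ)
    (hf : f = Finset.univ.sup'
      (Finset.univ_nonempty_iff.mpr (Fin.pos_iff_nonempty.mp hn))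
      (fun i => max (p i / pstar i) (pstar i / p i)))
    (x : Fin n → ℝ) (hx : ∀ i, 0 < x i)
    (hxlb : ∀ i, w i * f ^ β * (f * p i / pstar i) ^ (-E) ≤ x i)
    (hxub : ∀ i, x i ≤ w i * f ^ (-β) * (f * pstar i / p i) ^ E)
    (p' : Fin n → ℝ)
    (hp' : ∀ i, p' i = p i * (1 + lam * min 1 ((x i - w i) / w i)))
    (f' : ℝ)
    (hf' : f' = Finset.univ.sup'
      (Finset.univ_nonempty_iff.mpr (Fin.pos_iff_nonempty.mp hn))
      (fun i => max (p' i / pstar i) (pstar i / p' i))) :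
    (2 ≤ f ^ β → f' ≤ (1 - lam / 2) * f) ∧
    (f ^ β ≤ 2 → f' ≤ f ^ (1 - lam * β / (2 * Real.log 2))) :=
  stmt12_general n hn w p pstar hw hp hpstar lam E β hE hlam0 hlam1 hβ f hf x hxlb hxub p' hp' f'
    hf'
end

section
/- Let 0 < λ ≤ 1, 0 < β ≤ 1 and 0 < δ ≤ β. Let (f_k)_{k≥0} be a sequence of reals with f_k ≥ 1 for all k, such that for every k: if f_k^β ≥ 2 then f_{k+1} ≤ (1 − λ/2)·f_k, and if f_k^β ≤ 2 then f_{k+1} ≤ f_k^{1 − λβ/(2 ln 2)}. Let N = ⌈max(0, (2/λ)·ln f_0)⌉ + ⌈max(0, (2 ln 2/(λβ))·ln((ln 2)/δ))⌉. Then for every k ≥ N, f_k ≤ 1 + 2δ/β. -/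
/-- Quantitative form of Theorem 7 (duration of Phase 1): if the daily
price-imbalance bounds `f_k ≥ 1` satisfy the one-day contraction
guarantees, then after
`N = ⌈max(0, (2/λ)·ln f₀)⌉ + ⌈max(0, (2 ln 2/(λβ))·ln((ln 2)/δ))⌉`
days the imbalance is at most `1 + 2δ/β`. -/
theorem stmt13 (lam β δ : ℝ) (hlam0 : 0 < lam) (hlam1 : lam ≤ 1)
    (hβ0 : 0 < β) (hβ1 : β ≤ 1) (hδ0 : 0 < δ) (hδβ : δ ≤ β)
    (f : ℕ → ℝ) (hf1 : ∀ k, 1 ≤ f k)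
    (hfar : ∀ k, 2 ≤ f k ^ β → f (k + 1) ≤ (1 - lam / 2) * f k)
    (hnear : ∀ k, f k ^ β ≤ 2 → f (k + 1) ≤ f k ^ (1 - lam * β / (2 * Real.log 2)))
    (N : ℕ)
    (hN : N = ⌈max 0 ((2 / lam) * Real.log (f 0))⌉₊ +
      ⌈max 0 ((2 * Real.log 2 / (lam * β)) * Real.log (Real.log 2 / δ))⌉₊) :
    ∀ k, N ≤ k → f k ≤ 1 + 2 * δ / β := by
  intro k hk
  have hL2 : (0.6931471803 : ℝ) < Real.log 2 := Real.log_two_gt_d9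
  set L2 := Real.log 2 with hL2def
  have hL2pos : (0:ℝ) < L2 := by linarith
  set c : ℝ := 1 - lam * β / (2 * L2) with hc
  have hc0 : 0 < c := by
    have h1 : lam * β ≤ 1 := by nlinarith
    have h2 : lam * β / (2 * L2) < 1 := by
      rw [div_lt_one (by linarith)]; linarith
    simp only [hc]; linarith
  have hc1 : c ≤ 1 := by
    have : 0 ≤ lam * β / (2 * L2) := by positivity
    simp only [hc]; linarith
  have hfpos : ∀ j, (0:ℝ) < f j := fun j => lt_of_lt_of_le one_pos (hf1 j)
  set g : ℕ → ℝ := fun j => Real.log (f j) with hg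
  have hg0 : ∀ j, 0 ≤ g j := fun j => Real.log_nonneg (hf1 j)
  have hgj : ∀ j, Real.log (f j) = g j := fun _ => rfl
  -- far step
  have far : ∀ j, L2 / β ≤ g j → g (j + 1) ≤ g j - lam / 2 := by
    intro j hj
    have h2 : (2:ℝ) ≤ f j ^ β := by
      rw [Real.rpow_def_of_pos (hfpos j), mul_comm]
      have hb : L2 ≤ β * g j := by
        rw [div_le_iff₀ hβ0] at hj; linarith
      calc (2:ℝ) = Real.exp L2 := (Real.exp_log two_pos).symm
        _ ≤ _ := Real.exp_le_exp.mpr (by rw [hgj]; exact hb)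
    have h3 := hfar j h2
    have hhalf : (0:ℝ) < 1 - lam / 2 := by linarith
    have hpos : (0:ℝ) < (1 - lam / 2) * f j := mul_pos hhalf (hfpos j)
    have hlog : g (j + 1) ≤ Real.log ((1 - lam / 2) * f j) :=
      Real.log_le_log (hfpos (j + 1)) h3
    rw [Real.log_mul (ne_of_gt hhalf) (ne_of_gt (hfpos j)), hgj] at hlog
    have : Real.log (1 - lam / 2) ≤ -(lam / 2) := by
      have := Real.log_le_sub_one_of_pos hhalf; linarith
    linarith
  -- near step
  have near : ∀ j, g j ≤ L2 / β → g (j + 1) ≤ c * g j := by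
    intro j hj
    have h2 : f j ^ β ≤ 2 := by
      rw [Real.rpow_def_of_pos (hfpos j), mul_comm, hgj]
      have hb : β * g j ≤ L2 := by
        rw [le_div_iff₀ hβ0] at hj; linarith
      calc Real.exp (β * g j) ≤ Real.exp L2 := Real.exp_le_exp.mpr hb
        _ = 2 := Real.exp_log two_pos
    have h3 := hnear j h2
    have hlog : g (j + 1) ≤ Real.log (f j ^ c) :=
      Real.log_le_log (hfpos (j + 1)) h3
    rw [Real.log_rpow (hfpos j), hgj] at hlog
    exact hlog
  -- Lemma A
  have lemA : ∀ j, g j ≤ max (g 0 - j * (lam / 2)) (L2 / β) := by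
    intro j
    induction j with
    | zero => simp [le_max_iff]
    | succ n ih =>
      rcases le_total (g n) (L2 / β) with h | h
      · have h1 := near n h
        have h2 : c * g n ≤ g n := by nlinarith [hg0 n]
        exact le_max_of_le_right (by linarith)
      · have h1 := far n h
        rcases max_cases (g 0 - n * (lam / 2)) (L2 / β) with ⟨he, _⟩ | ⟨he, _⟩
        · rw [he] at ih
          apply le_max_of_le_left
          push_cast
          linarith
        · rw [he] at ih
          exact le_max_of_le_right (by linarith)
  set N1 := ⌈max 0 ((2 / lam) * Real.log (f 0))⌉₊ with hN1
  set N2 := ⌈max 0 ((2 * L2 / (lam * β)) * Real.log (L2 / δ))⌉₊ with hN2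
  have hLβpos : (0:ℝ) ≤ L2 / β := by positivity
  -- g N1 ≤ L2/β
  have hgN1 : g N1 ≤ L2 / β := by
    have h1 : (2 / lam) * g 0 ≤ (N1 : ℝ) := by
      calc (2 / lam) * g 0 = (2 / lam) * Real.log (f 0) := by rw [hgj]
        _ ≤ max 0 ((2 / lam) * Real.log (f 0)) := le_max_right _ _
        _ ≤ (N1 : ℝ) := Nat.le_ceil _
    have heq : (2 / lam) * g 0 = 2 * g 0 / lam := by ring
    rw [heq, div_le_iff₀ hlam0] at h1
    have h2 : g 0 - (N1 : ℝ) * (lam / 2) ≤ 0 := by linarith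
    have h3 := lemA N1
    rcases max_cases (g 0 - (N1 : ℝ) * (lam / 2)) (L2 / β) with ⟨he, _⟩ | ⟨he, _⟩ <;>
      rw [he] at h3 <;> linarith
  -- Lemma B
  have lemB : ∀ j, g (N1 + j) ≤ c ^ j * (L2 / β) := by
    intro j
    induction j with
    | zero => simpa using hgN1
    | succ n ih =>
      have hcn : c ^ n ≤ 1 := pow_le_one₀ (le_of_lt hc0) hc1
      have h1 : g (N1 + n) ≤ L2 / β := by nlinarith
      have h2 := near (N1 + n) h1
      calc g (N1 + n + 1) ≤ c * g (N1 + n) := h2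
        _ ≤ c * (c ^ n * (L2 / β)) := mul_le_mul_of_nonneg_left ih (le_of_lt hc0)
        _ = c ^ (n + 1) * (L2 / β) := by ring
  -- main
  obtain ⟨j, rfl⟩ : ∃ j, k = N1 + j := ⟨k - N1, by omega⟩
  have hjN2 : N2 ≤ j := by omega
  have h1 : g (N1 + j) ≤ c ^ N2 * (L2 / β) := by
    have h := lemB j
    have hmono : c ^ j ≤ c ^ N2 := pow_le_pow_of_le_one (le_of_lt hc0) hc1 hjN2
    nlinarith
  have hkey : c ^ N2 * L2 ≤ δ := by
    rcases le_total L2 δ with h | h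
    · have : c ^ N2 ≤ 1 := pow_le_one₀ (le_of_lt hc0) hc1
      nlinarith
    · have hN2ge : (2 * L2 / (lam * β)) * Real.log (L2 / δ) ≤ (N2 : ℝ) :=
        le_trans (le_max_right _ _) (Nat.le_ceil _)
      have hlogc : Real.log c ≤ -(lam * β / (2 * L2)) := by
        have := Real.log_le_sub_one_of_pos hc0
        simp only [hc] at this ⊢; linarith
      have hfac : (0:ℝ) < lam * β / (2 * L2) := by positivity
      have h6 := mul_le_mul_of_nonneg_right hN2ge hfac.le
      have h7 : (2 * L2 / (lam * β)) * Real.log (L2 / δ) * (lam * β / (2 * L2))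
          = Real.log (L2 / δ) := by field_simp
      have hstep : Real.log (L2 / δ) ≤ (N2 : ℝ) * (lam * β / (2 * L2)) := by
        rw [← h7]; exact h6
      have h5 : Real.log (L2 / δ) = Real.log L2 - Real.log δ :=
        Real.log_div (ne_of_gt hL2pos) (ne_of_gt hδ0)
      have hN2nn : (0:ℝ) ≤ (N2:ℝ) := Nat.cast_nonneg _
      have hll : Real.log (c ^ N2) ≤ Real.log (δ / L2) := by
        rw [Real.log_pow, Real.log_div (ne_of_gt hδ0) (ne_of_gt hL2pos)]
        have h8 := mul_le_mul_of_nonneg_left hlogc hN2nn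
        linarith
      have hcpow : c ^ N2 ≤ δ / L2 := by
        have hp1 : (0:ℝ) < c ^ N2 := pow_pos hc0 _
        have hp2 : (0:ℝ) < δ / L2 := by positivity
        calc c ^ N2 = Real.exp (Real.log (c ^ N2)) := (Real.exp_log hp1).symm
          _ ≤ Real.exp (Real.log (δ / L2)) := Real.exp_le_exp.mpr hll
          _ = δ / L2 := Real.exp_log hp2
      calc c ^ N2 * L2 ≤ (δ / L2) * L2 :=
            mul_le_mul_of_nonneg_right hcpow hL2pos.le
        _ = δ := by field_simp
  have hgk : g (N1 + j) ≤ δ / β := by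
    have h9 : c ^ N2 * (L2 / β) ≤ δ / β := by
      rw [show c ^ N2 * (L2 / β) = (c ^ N2 * L2) / β from by ring]
      exact (div_le_div_iff_of_pos_right hβ0).mpr hkey
    linarith
  -- f k = exp (g k) ≤ exp(δ/β) ≤ 1 + 2 δ/β
  have hx : δ / β ≤ 1 := by rw [div_le_one hβ0]; linarith
  have hx0 : (0:ℝ) ≤ δ / β := by positivity
  have hexp : Real.exp (δ / β) ≤ 1 + 2 * (δ / β) := by
    have h := Real.abs_exp_sub_one_le (x := δ / β) (by rwa [abs_of_nonneg hx0])
    rw [abs_of_nonneg hx0] at h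
    have := (abs_le.mp h).2
    linarith
  have hfk : f (N1 + j) = Real.exp (g (N1 + j)) := (Real.exp_log (hfpos _)).symm
  rw [hfk]
  calc Real.exp (g (N1 + j)) ≤ Real.exp (δ / β) := Real.exp_le_exp.mpr hgk
    _ ≤ 1 + 2 * (δ / β) := hexp
    _ = 1 + 2 * δ / β := by ring
end

section
/- Let x, x̄, w̃, w be reals, and let κ > 0, λ > 0, c₁ > 0, c₂ > 1 satisfy 4κ(1 + c₂) ≤ λc₁ ≤ 1/2. Let S = max{x, x̄, w̃} − min{x, x̄, w̃} and K = κ(x − w). If |w̃ − w| ≤ 2S, then |K| − c₁λS − c₂·K·sign(w̃ − w) ≤ −(κ(1 + c₂)/(1 + 2c₂))·(S + c₂|w̃ − w|). -/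
/-- Core case analysis of Lemma 5, case `|w̃ − w| ≤ 2·span`: with
`S = span{x, x̄, w̃}` and `K = κ(x − w)`, if `4κ(1 + c₂) ≤ λc₁ ≤ 1/2` then
`|K| − c₁λS − c₂·K·sign(w̃ − w) ≤ −(κ(1+c₂)/(1+2c₂))·(S + c₂|w̃ − w|)`. -/
theorem stmt14 (x xbar wtil w κ lam c₁ c₂ : ℝ)
    (hκ : 0 < κ) (hlam : 0 < lam) (hc₁ : 0 < c₁) (hc₂ : 1 < c₂)
    (hcond1 : 4 * κ * (1 + c₂) ≤ lam * c₁) (hcond2 : lam * c₁ ≤ 1 / 2)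
    (S K : ℝ)
    (hS : S = max x (max xbar wtil) - min x (min xbar wtil))
    (hK : K = κ * (x - w))
    (hcase : |wtil - w| ≤ 2 * S) :
    |K| - c₁ * lam * S - c₂ * K * Real.sign (wtil - w) ≤
      -(κ * (1 + c₂) / (1 + 2 * c₂)) * (S + c₂ * |wtil - w|) := by
  set D := wtil - w with hD
  set s := Real.sign D with hs
  have hA : |x - wtil| ≤ S := by
    rw [hS, abs_sub_le_iff]
    constructor
    · have h1 := le_max_left x (max xbar wtil)
      have h2 : min x (min xbar wtil) ≤ wtil :=
        (min_le_right _ _).trans (min_le_right _ _)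
      linarith
    · have h1 : wtil ≤ max x (max xbar wtil) :=
        (le_max_right xbar wtil).trans (le_max_right _ _)
      have h2 := min_le_left x (min xbar wtil)
      linarith
  have hsD : s * D = |D| := by
    rcases lt_trichotomy D 0 with h | h | h
    · rw [hs, Real.sign_of_neg h, abs_of_neg h]; ring
    · simp [hs, h]
    · rw [hs, Real.sign_of_pos h, abs_of_pos h]; ring
  have hs1 : |s| ≤ 1 := by
    rcases lt_trichotomy D 0 with h | h | h
    · simp [hs, Real.sign_of_neg h]
    · simp [hs, h]
    · simp [hs, Real.sign_of_pos h]
  have hKexp : K = κ * (x - wtil) + κ * D := by rw [hK, hD]; ring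
  have hKabs : |K| ≤ κ * |x - wtil| + κ * |D| := by
    rw [hKexp]
    calc |κ * (x - wtil) + κ * D| ≤ |κ * (x - wtil)| + |κ * D| := abs_add_le _ _
      _ = κ * |x - wtil| + κ * |D| := by
          rw [abs_mul, abs_mul, abs_of_pos hκ]
  have hms : -c₂ * K * s ≤ c₂ * κ * |x - wtil| - c₂ * κ * |D| := by
    have h1 : (x - wtil) * s ≥ -|x - wtil| := by
      have := abs_mul (x - wtil) s
      have h2 : |(x - wtil) * s| ≤ |x - wtil| := by
        rw [this]
        nlinarith [abs_nonneg (x - wtil), abs_nonneg s]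
      nlinarith [neg_abs_le ((x - wtil) * s)]
    have heq : K * s = κ * ((x - wtil) * s) + κ * |D| := by
      rw [hKexp]; rw [← hsD]; ring
    have hcκ : (0:ℝ) ≤ c₂ * κ := by positivity
    have h2 : c₂ * κ * (-((x - wtil) * s)) ≤ c₂ * κ * |x - wtil| :=
      mul_le_mul_of_nonneg_left (by linarith) hcκ
    calc -c₂ * K * s = c₂ * κ * (-((x - wtil) * s)) - c₂ * κ * |D| := by
          rw [show -c₂ * K * s = -c₂ * (K * s) by ring, heq]; ring
      _ ≤ c₂ * κ * |x - wtil| - c₂ * κ * |D| := by linarith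
  have hSpos : 0 ≤ S := by
    have := abs_nonneg D
    linarith
  have hABnn : 0 ≤ |x - wtil| := abs_nonneg _
  have hDnn : 0 ≤ |D| := abs_nonneg _
  have hden : (0:ℝ) < 1 + 2 * c₂ := by linarith
  have key : (|K| - c₁ * lam * S - c₂ * K * s) * (1 + 2 * c₂)
      ≤ -(κ * (1 + c₂) * (S + c₂ * |D|)) := by
    have hb1 : |K| - c₂ * K * s ≤ (1 + c₂) * κ * |x - wtil| + (1 - c₂) * κ * |D| := by
      nlinarith [hms, hKabs]
    have hb1' : (|K| - c₂ * K * s) * (1 + 2 * c₂)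
        ≤ ((1 + c₂) * κ * |x - wtil| + (1 - c₂) * κ * |D|) * (1 + 2 * c₂) :=
      mul_le_mul_of_nonneg_right hb1 hden.le
    have P1 : (0:ℝ) ≤ (S - |x - wtil|) * ((1 + c₂) * (1 + 2 * c₂) * κ) :=
      mul_nonneg (sub_nonneg.2 hA) (by positivity)
    have P3 : (0:ℝ) ≤ S * ((lam * c₁ - 4 * κ * (1 + c₂)) * (1 + 2 * c₂)) :=
      mul_nonneg hSpos (mul_nonneg (by linarith) hden.le)
    rcases le_or_gt (c₂ * c₂) (1 + 2 * c₂) with hcs | hcs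
    · have P2 : (0:ℝ) ≤ (2 * S - |D|) * (κ * (1 + 2 * c₂ - c₂ * c₂)) :=
        mul_nonneg (by linarith) (mul_nonneg hκ.le (by linarith))
      have P4 : (0:ℝ) ≤ κ * (c₂ * (1 + 2 * c₂) * S) :=
        mul_nonneg hκ.le (mul_nonneg (by positivity) hSpos)
      linarith [hb1', P1, P2, P3, P4]
    · have P2 : (0:ℝ) ≤ |D| * (κ * (c₂ * c₂ - 1 - 2 * c₂)) :=
        mul_nonneg hDnn (mul_nonneg hκ.le (by linarith))
      have P5 : (0:ℝ) ≤ κ * (((1 + c₂) * (1 + 3 * c₂)) * S) :=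
        mul_nonneg hκ.le (mul_nonneg (by positivity) hSpos)
      linarith [hb1', P1, P2, P3, P5]
  have hfin : -(κ * (1 + c₂) / (1 + 2 * c₂)) * (S + c₂ * |D|)
      = -(κ * (1 + c₂) * (S + c₂ * |D|)) / (1 + 2 * c₂) := by ring
  rw [hfin, le_div_iff₀ hden]
  linarith [key]
end

section
/- Let x, x̄, w̃, w be reals, and let κ > 0, λ > 0, c₁ > 0, c₂ > 1 satisfy 4κ(1 + c₂) ≤ λc₁ ≤ 1/2. Let S = max{x, x̄, w̃} − min{x, x̄, w̃} and K = κ(x − w). If |w̃ − w| > 2S, then |K| − c₁λS − c₂·K·sign(w̃ − w) ≤ −(κ(c₂ − 1)/(2c₂))·(S + c₂|w̃ − w|). -/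
/-- Core case analysis of Lemma 5, case `|w̃ − w| > 2·span`: with
`S = span{x, x̄, w̃}` and `K = κ(x − w)`, if `4κ(1 + c₂) ≤ λc₁ ≤ 1/2` then
`|K| − c₁λS − c₂·K·sign(w̃ − w) ≤ −(κ(c₂−1)/(2c₂))·(S + c₂|w̃ − w|)`. -/
theorem stmt15 (x xbar wtil w κ lam c₁ c₂ : ℝ)
    (hκ : 0 < κ) (hlam : 0 < lam) (hc₁ : 0 < c₁) (hc₂ : 1 < c₂)
    (hcond1 : 4 * κ * (1 + c₂) ≤ lam * c₁) (hcond2 : lam * c₁ ≤ 1 / 2)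
    (S K : ℝ)
    (hS : S = max x (max xbar wtil) - min x (min xbar wtil))
    (hK : K = κ * (x - w))
    (hcase : 2 * S < |wtil - w|) :
    |K| - c₁ * lam * S - c₂ * K * Real.sign (wtil - w) ≤
      -(κ * (c₂ - 1) / (2 * c₂)) * (S + c₂ * |wtil - w|) := by
  have hxM : x ≤ max x (max xbar wtil) := le_max_left _ _
  have hwM : wtil ≤ max x (max xbar wtil) :=
    le_max_of_le_right (le_max_right _ _)
  have hxm : min x (min xbar wtil) ≤ x := min_le_left _ _
  have hwm : min x (min xbar wtil) ≤ wtil :=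
    (min_le_right _ _).trans (min_le_right _ _)
  have hS0 : 0 ≤ S := by rw [hS]; linarith
  have hx1 : x - wtil ≤ S := by rw [hS]; linarith
  have hx2 : wtil - x ≤ S := by rw [hS]; linarith
  have hc2pos : (0:ℝ) < c₂ := by linarith
  have hc21 : (0:ℝ) ≤ c₂ - 1 := by linarith
  have h2c : (0:ℝ) < 2 * c₂ := by linarith
  have hnn : (0:ℝ) ≤ κ * (c₂ - 1) * (2 * c₂) := by positivity
  have hnn2 : (0:ℝ) ≤ κ * (c₂ - 1) * c₂ := by positivity
  have h4 : (0:ℝ) ≤ κ * (c₂ - 1) * S * (2 * c₂ - 1) := by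
    have : (0:ℝ) ≤ 2 * c₂ - 1 := by linarith
    positivity
  have h5 : (0:ℝ) ≤ 2 * c₂ * (c₁ * lam) * S := by positivity
  have h6 : (0:ℝ) ≤ 2 * c₂ * (lam * c₁ - 4 * κ * (1 + c₂)) * S :=
    mul_nonneg (mul_nonneg h2c.le (by linarith)) hS0
  have h7 : (0:ℝ) ≤ κ * S := by positivity
  have h8 : (0:ℝ) ≤ κ * c₂ * S := by positivity
  have h9 : (0:ℝ) ≤ κ * c₂ ^ 2 * S := by positivity
  rcases lt_trichotomy (wtil - w) 0 with hD | hD | hD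
  · have habsD : |wtil - w| = -(wtil - w) := abs_of_neg hD
    rw [habsD] at hcase ⊢
    have hKneg : K < 0 := by
      rw [hK]; nlinarith
    have habsK : |K| = -K := abs_of_neg hKneg
    rw [habsK, Real.sign_of_neg hD, hK]
    rw [neg_mul, le_neg, div_mul_eq_mul_div, div_le_iff₀ h2c]
    have h1 : κ * (c₂ - 1) * (2 * c₂) * (-(wtil - w) - S) ≤
        κ * (c₂ - 1) * (2 * c₂) * (-(x - w)) :=
      mul_le_mul_of_nonneg_left (by linarith) hnn
    have h2 : κ * (c₂ - 1) * c₂ * (2 * S) ≤ κ * (c₂ - 1) * c₂ * (-(wtil - w)) :=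
      mul_le_mul_of_nonneg_left (by linarith) hnn2
    linarith [h1, h2, h4, h5, h6, h7, h8, h9]
  · rw [hD] at hcase
    simp only [abs_zero] at hcase
    linarith
  · have habsD : |wtil - w| = wtil - w := abs_of_pos hD
    rw [habsD] at hcase ⊢
    have hKpos : 0 < K := by
      rw [hK]; nlinarith
    have habsK : |K| = K := abs_of_pos hKpos
    rw [habsK, Real.sign_of_pos hD, hK]
    rw [neg_mul, le_neg, div_mul_eq_mul_div, div_le_iff₀ h2c]
    have h1 : κ * (c₂ - 1) * (2 * c₂) * ((wtil - w) - S) ≤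
        κ * (c₂ - 1) * (2 * c₂) * (x - w) :=
      mul_le_mul_of_nonneg_left (by linarith) hnn
    have h2 : κ * (c₂ - 1) * c₂ * (2 * S) ≤ κ * (c₂ - 1) * c₂ * (wtil - w) :=
      mul_le_mul_of_nonneg_left (by linarith) hnn2
    linarith [h1, h2, h4, h5, h6, h7, h8, h9]
end

section
/- Let p > 0 and Δp be reals with p' := p + Δp > 0, and let x, x', x̄, w̃ be reals with s := p·x and s' := p'·x'. Suppose Δp, x̄ − w̃, x − w̃ and x' − w̃ are all strictly positive, or all strictly negative. Then p'·|x' − w̃| − p·(max{x̄, x, w̃} − min{x̄, x, w̃}) ≤ sign(Δp)·(s' − s) − w̃·|Δp|. -/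
/-!
Since `Δp`, `x − w̃` and `x' − w̃` share one sign, the right-hand side equals
`p'·|x' − w̃| − p·|x − w̃|` exactly, and `|x − w̃|` is at most the span of `{x̄, x, w̃}`.
-/

theorem abs_sub_le_max_sub_min_of_three {α : Type*} [AddCommGroup α] [LinearOrder α]
    [IsOrderedAddMonoid α] (a b c : α) :
    |b - c| ≤ max a (max b c) - min a (min b c) := by
  rw [← max_sub_min_eq_abs']
  exact sub_le_sub (le_max_right a _) (min_le_right a _)

theorem sign_mul_sub_sub_mul_abs_of_same_sign {p Δp x x' w : ℝ}
    (hsigns : (0 < Δp ∧ 0 < x - w ∧ 0 < x' - w) ∨ (Δp < 0 ∧ x - w < 0 ∧ x' - w < 0)) :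
    Real.sign Δp * ((p + Δp) * x' - p * x) - w * |Δp| =
      (p + Δp) * |x' - w| - p * |x - w| := by
  rcases hsigns with ⟨hΔp, hx, hx'⟩ | ⟨hΔp, hx, hx'⟩
  · rw [Real.sign_of_pos hΔp, abs_of_pos hΔp, abs_of_pos hx, abs_of_pos hx']
    ring
  · rw [Real.sign_of_neg hΔp, abs_of_neg hΔp, abs_of_neg hx, abs_of_neg hx']
    ring

theorem stmt16_general (p Δp p' x x' xbar wtil s s' : ℝ)
    (hp : 0 < p) (hp'def : p' = p + Δp)
    (hs : s = p * x) (hs' : s' = p' * x')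
    (hsigns : (0 < Δp ∧ 0 < xbar - wtil ∧ 0 < x - wtil ∧ 0 < x' - wtil) ∨
      (Δp < 0 ∧ xbar - wtil < 0 ∧ x - wtil < 0 ∧ x' - wtil < 0)) :
    p' * |x' - wtil| - p * (max xbar (max x wtil) - min xbar (min x wtil)) ≤
      Real.sign Δp * (s' - s) - wtil * |Δp| := by
  subst hp'def hs hs'
  have hsigns' : (0 < Δp ∧ 0 < x - wtil ∧ 0 < x' - wtil) ∨
      (Δp < 0 ∧ x - wtil < 0 ∧ x' - wtil < 0) := by
    rcases hsigns with ⟨h₁, -, h₃, h₄⟩ | ⟨h₁, -, h₃, h₄⟩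
    exacts [Or.inl ⟨h₁, h₃, h₄⟩, Or.inr ⟨h₁, h₃, h₄⟩]
  rw [sign_mul_sub_sub_mul_abs_of_same_sign hsigns']
  gcongr
  exact abs_sub_le_max_sub_min_of_three xbar x wtil

/-- Case 1 of Lemma 14 (change of the potential's leading term at a price
update when the sign of `x − w̃` is not flipped and `x` moves towards `w̃`):
if `Δp`, `x̄ − w̃`, `x − w̃`, `x' − w̃` are all strictly positive, or all
strictly negative, then
`p'·|x' − w̃| − p·span{x̄, x, w̃} ≤ sign(Δp)·(s' − s) − w̃·|Δp|`. -/
theorem stmt16 (p Δp p' x x' xbar wtil s s' : ℝ)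
    (hp : 0 < p) (hp'def : p' = p + Δp) (hp' : 0 < p')
    (hs : s = p * x) (hs' : s' = p' * x')
    (hsigns : (0 < Δp ∧ 0 < xbar - wtil ∧ 0 < x - wtil ∧ 0 < x' - wtil) ∨
      (Δp < 0 ∧ xbar - wtil < 0 ∧ x - wtil < 0 ∧ x' - wtil < 0)) :
    p' * |x' - wtil| - p * (max xbar (max x wtil) - min xbar (min x wtil)) ≤
      Real.sign Δp * (s' - s) - wtil * |Δp| :=
  stmt16_general p Δp p' x x' xbar wtil s s' hp hp'def hs hs' hsigns
end

section
/- Let 0 < λ ≤ 1/2, and let κ, a₁, a₂ > 0 with κ·a₁ ≥ 4λ². Let f̄ ≥ 0 and let k ≥ (2/(κ·a₁))·(f̄ + a₂). Let l ≥ 1 and let μ₁,…,μ_l ∈ [−λ, λ] and Δt₁,…,Δt_l ∈ (0, 1] satisfy Σ_{i=1}^{l} Δt_i ≥ k and Π_{i=1}^{l} (1 + μ_i·Δt_i) ≤ e^{f̄}. Then Σ_{i=1}^{l} (−μ_i + κ·a₁)·Δt_i ≥ a₂. -/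
/-!
Taking logarithms, `log (1 + x) ≥ x - 2x²` for `x ≥ -1/2` and `(μᵢΔtᵢ)² ≤ λ²Δtᵢ` turn the bound on
the price factor into `Σ μᵢΔtᵢ ≤ f̄ + 2λ²T`, where `T = Σ Δtᵢ ≥ k`. Since `2λ² ≤ κa₁/2`, the refill
`Σ (−μᵢ + κa₁)Δtᵢ` is then at least `κa₁T/2 - f̄ ≥ a₂`.
-/

open Finset Real

lemma sub_two_mul_sq_le_log_one_add {x : ℝ} (hx : -(1 / 2) ≤ x) :
    x - 2 * x ^ 2 ≤ log (1 + x) := by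
  have hpos : 0 < 1 + x := by linarith
  have hinv : (1 + x)⁻¹ ≤ 1 - x + 2 * x ^ 2 := by
    rw [inv_le_iff_one_le_mul₀' hpos]
    nlinarith [mul_nonneg (sq_nonneg x) (by linarith : 0 ≤ 1 + 2 * x)]
  linarith [one_sub_inv_le_log_of_pos hpos]

lemma neg_half_le_mul_of_mem_Icc {lam μ t : ℝ} (hlam : lam ≤ 1 / 2)
    (hμ : -lam ≤ μ ∧ μ ≤ lam) (ht : 0 ≤ t ∧ t ≤ 1) : -(1 / 2) ≤ μ * t := by
  nlinarith [hμ.1, hμ.2, ht.1, ht.2]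

lemma mul_sub_two_mul_sq_mul_le_log_one_add {lam μ t : ℝ} (hlam : lam ≤ 1 / 2)
    (hμ : -lam ≤ μ ∧ μ ≤ lam) (ht : 0 ≤ t ∧ t ≤ 1) :
    μ * t - 2 * lam ^ 2 * t ≤ log (1 + μ * t) := by
  have hx := neg_half_le_mul_of_mem_Icc hlam hμ ht
  obtain ⟨hμl, hμu⟩ := hμ
  obtain ⟨ht0, ht1⟩ := ht
  have hsq : (μ * t) ^ 2 ≤ lam ^ 2 * t := by
    calc (μ * t) ^ 2 = μ ^ 2 * (t * t) := by ring
      _ ≤ lam ^ 2 * (1 * t) :=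
          mul_le_mul (sq_le_sq' hμl hμu) (mul_le_mul_of_nonneg_right ht1 ht0)
            (mul_nonneg ht0 ht0) (sq_nonneg lam)
      _ = lam ^ 2 * t := by ring
  linarith [sub_two_mul_sq_le_log_one_add hx]

lemma sum_mul_le_of_prod_one_add_mul_le_exp {ι : Type*} (s : Finset ι) {lam F : ℝ}
    {μ t : ι → ℝ} (hlam : lam ≤ 1 / 2) (hμ : ∀ i ∈ s, -lam ≤ μ i ∧ μ i ≤ lam)
    (ht : ∀ i ∈ s, 0 ≤ t i ∧ t i ≤ 1) (hprod : ∏ i ∈ s, (1 + μ i * t i) ≤ exp F) :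
    ∑ i ∈ s, μ i * t i ≤ F + 2 * lam ^ 2 * ∑ i ∈ s, t i := by
  have hpos : ∀ i ∈ s, 0 < 1 + μ i * t i := fun i hi => by
    linarith [neg_half_le_mul_of_mem_Icc hlam (hμ i hi) (ht i hi)]
  have hlog : ∑ i ∈ s, log (1 + μ i * t i) ≤ F := by
    rw [← log_prod fun i hi => (hpos i hi).ne', ← log_exp F]
    exact log_le_log (prod_pos hpos) hprod
  have hterm := sum_le_sum fun i hi =>
    mul_sub_two_mul_sq_mul_le_log_one_add hlam (hμ i hi) (ht i hi)
  rw [sum_sub_distrib, ← mul_sum] at hterm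
  linarith

theorem stmt17_general (lam κ a₁ a₂ fbar k : ℝ)
    (hlam1 : lam ≤ 1 / 2)
    (hκ : 0 < κ) (ha₁ : 0 < a₁)
    (hκa₁ : 4 * lam ^ 2 ≤ κ * a₁)
    (hk : 2 / (κ * a₁) * (fbar + a₂) ≤ k)
    (l : ℕ)
    (μ Δt : ℕ → ℝ)
    (hμ : ∀ i ∈ Finset.range l, -lam ≤ μ i ∧ μ i ≤ lam)
    (hΔt : ∀ i ∈ Finset.range l, 0 < Δt i ∧ Δt i ≤ 1)
    (hsum : k ≤ ∑ i ∈ Finset.range l, Δt i)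
    (hprod : ∏ i ∈ Finset.range l, (1 + μ i * Δt i) ≤ Real.exp fbar) :
    a₂ ≤ ∑ i ∈ Finset.range l, (-μ i + κ * a₁) * Δt i := by
  have hc : 0 < κ * a₁ := mul_pos hκ ha₁
  have hdrift := sum_mul_le_of_prod_one_add_mul_le_exp (range l) hlam1 hμ
    (fun i hi => ⟨(hΔt i hi).1.le, (hΔt i hi).2⟩) hprod
  have hT : 0 ≤ ∑ i ∈ range l, Δt i := sum_nonneg fun i hi => (hΔt i hi).1.le
  have hk' : 2 * (fbar + a₂) ≤ κ * a₁ * k := by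
    rwa [div_mul_eq_mul_div, div_le_iff₀ hc, mul_comm k] at hk
  have hsplit : ∑ i ∈ range l, (-μ i + κ * a₁) * Δt i
      = κ * a₁ * ∑ i ∈ range l, Δt i - ∑ i ∈ range l, μ i * Δt i := by
    rw [mul_sum, ← sum_sub_distrib]
    exact sum_congr rfl fun i _ => by ring
  rw [hsplit]
  linarith [mul_nonneg (sub_nonneg.mpr hκa₁) hT, mul_le_mul_of_nonneg_left hsum hc.le]

/-- Core claim of Lemma 9 (a too-empty warehouse refills): if the price
updates over a span of at least `k ≥ (2/(κa₁))(f̄ + a₂)` days multiply the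
price by factors `1 + μᵢΔtᵢ` with `|μᵢ| ≤ λ`, `0 < Δtᵢ ≤ 1`, total factor at
most `e^{f̄}`, and `κa₁ ≥ 4λ²`, then `Σ (−μᵢ + κa₁)Δtᵢ ≥ a₂`. -/
theorem stmt17 (lam κ a₁ a₂ fbar k : ℝ)
    (hlam0 : 0 < lam) (hlam1 : lam ≤ 1 / 2)
    (hκ : 0 < κ) (ha₁ : 0 < a₁) (ha₂ : 0 < a₂)
    (hκa₁ : 4 * lam ^ 2 ≤ κ * a₁)
    (hfbar : 0 ≤ fbar)
    (hk : 2 / (κ * a₁) * (fbar + a₂) ≤ k)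
    (l : ℕ) (hl : 1 ≤ l)
    (μ Δt : ℕ → ℝ)
    (hμ : ∀ i ∈ Finset.range l, -lam ≤ μ i ∧ μ i ≤ lam)
    (hΔt : ∀ i ∈ Finset.range l, 0 < Δt i ∧ Δt i ≤ 1)
    (hsum : k ≤ ∑ i ∈ Finset.range l, Δt i)
    (hprod : ∏ i ∈ Finset.range l, (1 + μ i * Δt i) ≤ Real.exp fbar) :
    a₂ ≤ ∑ i ∈ Finset.range l, (-μ i + κ * a₁) * Δt i :=
  stmt17_general lam κ a₁ a₂ fbar k hlam1 hκ ha₁ hκa₁ hk l μ Δt hμ hΔt hsum hprod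
end

section
/- Let κ, a₁, a₂ > 0, f̄ ≥ 0, and let k ≥ (1/(κ·a₁))·(f̄ + a₂). Let l ≥ 1 and let μ₁,…,μ_l be reals and Δt₁,…,Δt_l > 0 with μ_i·Δt_i > −1 for every i, Σ_{i=1}^{l} Δt_i ≥ k, and Π_{i=1}^{l} (1 + μ_i·Δt_i) ≥ e^{−f̄}. Then Σ_{i=1}^{l} (μ_i + κ·a₁)·Δt_i ≥ a₂. -/
/-! Since `1 + x ≤ eˣ`, the lower bound `e^{−f̄}` on the product of the price factors forces
`Σ μᵢΔtᵢ ≥ −f̄`, while the drift `κa₁` accumulated over at least `k` days is at least `f̄ + a₂`. -/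

open Finset

theorem Real.prod_one_add_le_exp_sum_of_neg_one_le {ι : Type*} (s : Finset ι) (x : ι → ℝ)
    (hx : ∀ i ∈ s, -1 ≤ x i) : ∏ i ∈ s, (1 + x i) ≤ Real.exp (∑ i ∈ s, x i) := by
  rw [Real.exp_sum]
  refine prod_le_prod (fun i hi ↦ by linarith [hx i hi]) fun i _ ↦ ?_
  linarith [Real.add_one_le_exp (x i)]

theorem stmt18_general (κ a₁ a₂ fbar k : ℝ)
    (hκ : 0 < κ) (ha₁ : 0 < a₁)
    (hk : 1 / (κ * a₁) * (fbar + a₂) ≤ k)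
    (l : ℕ)
    (μ Δt : ℕ → ℝ)
    (hμΔt : ∀ i ∈ Finset.range l, -1 < μ i * Δt i)
    (hsum : k ≤ ∑ i ∈ Finset.range l, Δt i)
    (hprod : Real.exp (-fbar) ≤ ∏ i ∈ Finset.range l, (1 + μ i * Δt i)) :
    a₂ ≤ ∑ i ∈ Finset.range l, (μ i + κ * a₁) * Δt i := by
  have hκa₁ : 0 < κ * a₁ := mul_pos hκ ha₁
  have hdrift : -fbar ≤ ∑ i ∈ range l, μ i * Δt i :=
    Real.exp_le_exp.mp <| hprod.trans <|
      Real.prod_one_add_le_exp_sum_of_neg_one_le _ _ fun i hi ↦ (hμΔt i hi).le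
  have hk' : fbar + a₂ ≤ κ * a₁ * k := by
    rwa [one_div_mul_eq_div, div_le_iff₀ hκa₁, mul_comm] at hk
  have hspan : κ * a₁ * k ≤ κ * a₁ * ∑ i ∈ range l, Δt i :=
    mul_le_mul_of_nonneg_left hsum hκa₁.le
  rw [sum_congr rfl fun i _ ↦ add_mul (μ i) (κ * a₁) (Δt i), sum_add_distrib, ← mul_sum]
  linarith

/-- Core claim of Lemma 19 (a too-full warehouse empties): if the price
updates over a span of at least `k ≥ (1/(κa₁))(f̄ + a₂)` days multiply the
price by factors `1 + μᵢΔtᵢ > 0` with `Δtᵢ > 0` and total factor at least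
`e^{−f̄}`, then `Σ (μᵢ + κa₁)Δtᵢ ≥ a₂`. -/
theorem stmt18 (κ a₁ a₂ fbar k : ℝ)
    (hκ : 0 < κ) (ha₁ : 0 < a₁) (ha₂ : 0 < a₂)
    (hfbar : 0 ≤ fbar)
    (hk : 1 / (κ * a₁) * (fbar + a₂) ≤ k)
    (l : ℕ) (hl : 1 ≤ l)
    (μ Δt : ℕ → ℝ)
    (hΔt : ∀ i ∈ Finset.range l, 0 < Δt i)
    (hμΔt : ∀ i ∈ Finset.range l, -1 < μ i * Δt i)
    (hsum : k ≤ ∑ i ∈ Finset.range l, Δt i)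
    (hprod : Real.exp (-fbar) ≤ ∏ i ∈ Finset.range l, (1 + μ i * Δt i)) :
    a₂ ≤ ∑ i ∈ Finset.range l, (μ i + κ * a₁) * Δt i :=
  stmt18_general κ a₁ a₂ fbar k hκ ha₁ hk l μ Δt hμΔt hsum hprod
end
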